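/- arXiv:2410.04729 — 10 statements merged into one kernel-verified Lean document; each statement's English description precedes it below -/
import Mathlib

section
/- Let p ∈ ℕ with p ≥ 1, ω > 0, and θ ∈ 𝒮(p,ω). If φ ∈ ℬ𝒫𝒞(θ) is an asymptotically unpredictable function with values in ℝ^m, then for every vector c ∈ ℝ^m and every non-singular (invertible) matrix Ω ∈ ℝ^{m×m}, the function φ̃ defined by φ̃(t) = Ωφ(t) + c belongs to ℬ𝒫𝒞(θ) and is asymptotically unpredictable. -/
open Filter Topology

noncomputable section

/-- `𝒮(p,ω)`: strictly increasing sequences `θ : ℤ → ℝ` with `|θ k| → ∞` as `|k| → ∞`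
and `θ (k+p) = θ k + ω` for all `k`. -/
def SSeq (p : ℕ) (ω : ℝ) (θ : ℤ → ℝ) : Prop :=
  StrictMono θ ∧ Tendsto (fun k : ℤ => |θ k|) (cocompact ℤ) atTop ∧
    ∀ k : ℤ, θ (k + (p : ℤ)) = θ k + ω

/-- `ℬ𝒫𝒞(θ)`: bounded, continuous on each `(θ (k-1), θ k)`, right limits exist at each
`θ k`, and left-continuous at each `θ k`. -/
def BPC (m : ℕ) (θ : ℤ → ℝ) (φ : ℝ → EuclideanSpace ℝ (Fin m)) : Prop :=
  (∃ M : ℝ, ∀ t : ℝ, ‖φ t‖ ≤ M) ∧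
  (∀ k : ℤ, ContinuousOn φ (Set.Ioo (θ (k - 1)) (θ k))) ∧
  (∀ k : ℤ, ∃ L : EuclideanSpace ℝ (Fin m), Tendsto φ (nhdsWithin (θ k) (Set.Ioi (θ k))) (nhds L)) ∧
  (∀ k : ℤ, Tendsto φ (nhdsWithin (θ k) (Set.Iio (θ k))) (nhds (φ (θ k))))

/-- Conditions (i)–(iii) of Definition 2.1 with explicit data `ε₀, ν, μ, τ`. -/
def UnpredictableWith (m : ℕ) (θ : ℤ → ℝ) (ψ : ℝ → EuclideanSpace ℝ (Fin m))
    (ε₀ ν : ℝ) (μ τ : ℕ → ℝ) : Prop :=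
  0 < ε₀ ∧ 0 < ν ∧ Tendsto μ atTop atTop ∧ Tendsto τ atTop atTop ∧
  (∀ ε > (0 : ℝ), ∃ δ > (0 : ℝ), ∀ k : ℤ, ∀ s₁ ∈ Set.Ioo (θ (k - 1)) (θ k),
    ∀ s₂ ∈ Set.Ioo (θ (k - 1)) (θ k), |s₁ - s₂| < δ → ‖ψ s₁ - ψ s₂‖ < ε) ∧
  (∀ C : Set ℝ, IsCompact C →
    TendstoUniformlyOn (fun n t => ψ (t + μ n)) ψ atTop C) ∧
  (∀ n : ℕ, ∀ t ∈ Set.Icc (τ n - ν) (τ n + ν), ε₀ ≤ ‖ψ (t + μ n) - ψ t‖)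

/-- An unpredictable function in `ℬ𝒫𝒞(θ)`. -/
def Unpredictable (m : ℕ) (θ : ℤ → ℝ) (ψ : ℝ → EuclideanSpace ℝ (Fin m)) : Prop :=
  BPC m θ ψ ∧ ∃ ε₀ ν : ℝ, ∃ μ τ : ℕ → ℝ, UnpredictableWith m θ ψ ε₀ ν μ τ

/-- An asymptotically unpredictable function in `ℬ𝒫𝒞(θ)`. -/
def AsympUnpredictable (m : ℕ) (θ : ℤ → ℝ) (φ : ℝ → EuclideanSpace ℝ (Fin m)) : Prop :=
  BPC m θ φ ∧ ∃ ψ ξ : ℝ → EuclideanSpace ℝ (Fin m),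
    Unpredictable m θ ψ ∧ BPC m θ ξ ∧
    Tendsto (fun t => ‖ξ t‖) atTop (nhds (0 : ℝ)) ∧ ∀ t : ℝ, φ t = ψ t + ξ t


/-!
Asymptotic unpredictability survives composition with any map `f` that is Lipschitz (constant `K`)
and antilipschitz (constant `K'`). Boundedness, piecewise continuity and conditions (i), (ii) only
use that `f` is Lipschitz; the separation (iii) transfers with constant `ε₀ / (K' + 1)`;
and `f ∘ φ = f ∘ ψ + (f ∘ φ - f ∘ ψ)` with the second summand bounded by `K ‖ξ‖`.
For invertible `Ω`, the map `x ↦ Ω x + c` is a linear homeomorphism followed by a translation,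
hence Lipschitz and antilipschitz.
-/

section

variable {m n : ℕ} {θ : ℤ → ℝ}

theorem BPC.comp_lipschitzWith {φ : ℝ → EuclideanSpace ℝ (Fin m)} (hφ : BPC m θ φ)
    {f : EuclideanSpace ℝ (Fin m) → EuclideanSpace ℝ (Fin n)} {K : NNReal}
    (hf : LipschitzWith K f) : BPC n θ (f ∘ φ) := by
  obtain ⟨⟨M, hM⟩, hcont, hright, hleft⟩ := hφ
  refine ⟨⟨‖f 0‖ + K * M, fun t => ?_⟩, fun k => hf.continuous.comp_continuousOn (hcont k),
    fun k => ?_, fun k => (hf.continuous.tendsto _).comp (hleft k)⟩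
  · calc ‖f (φ t)‖ ≤ ‖f 0‖ + ‖f (φ t) - f 0‖ := norm_le_norm_add_norm_sub' _ _
      _ ≤ ‖f 0‖ + K * ‖φ t‖ := by simpa [dist_eq_norm] using hf.dist_le_mul (φ t) 0
      _ ≤ ‖f 0‖ + K * M := by gcongr; exact hM t
  · obtain ⟨L, hL⟩ := hright k
    exact ⟨f L, (hf.continuous.tendsto L).comp hL⟩

theorem BPC.sub {φ ψ : ℝ → EuclideanSpace ℝ (Fin m)} (hφ : BPC m θ φ) (hψ : BPC m θ ψ) :
    BPC m θ (φ - ψ) := by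
  obtain ⟨⟨M, hM⟩, hcont, hright, hleft⟩ := hφ
  obtain ⟨⟨M', hM'⟩, hcont', hright', hleft'⟩ := hψ
  refine ⟨⟨M + M', fun t => (norm_sub_le _ _).trans (add_le_add (hM t) (hM' t))⟩,
    fun k => (hcont k).sub (hcont' k), fun k => ?_, fun k => (hleft k).sub (hleft' k)⟩
  obtain ⟨L, hL⟩ := hright k
  obtain ⟨L', hL'⟩ := hright' k
  exact ⟨L - L', hL.sub hL'⟩

theorem UnpredictableWith.comp {ψ : ℝ → EuclideanSpace ℝ (Fin m)} {ε₀ ν : ℝ} {μ τ : ℕ → ℝ}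
    (hψ : UnpredictableWith m θ ψ ε₀ ν μ τ)
    {f : EuclideanSpace ℝ (Fin m) → EuclideanSpace ℝ (Fin n)} {K K' : NNReal}
    (hf : LipschitzWith K f) (hf' : AntilipschitzWith K' f) :
    UnpredictableWith n θ (f ∘ ψ) (ε₀ / (K' + 1)) ν μ τ := by
  obtain ⟨hε₀, hν, hμ, hτ, hequi, hrec, hsep⟩ := hψ
  refine ⟨by positivity, hν, hμ, hτ, fun ε hε => ?_,
    fun C hC => hf.uniformContinuous.comp_tendstoUniformlyOn (hrec C hC), fun j t ht => ?_⟩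
  · obtain ⟨η, hη, hfη⟩ := Metric.uniformContinuous_iff.mp hf.uniformContinuous ε hε
    obtain ⟨δ, hδ, hψδ⟩ := hequi η hη
    refine ⟨δ, hδ, fun k s₁ hs₁ s₂ hs₂ hs => ?_⟩
    simpa only [Function.comp_apply, ← dist_eq_norm] using
      hfη (by simpa only [dist_eq_norm] using hψδ k s₁ hs₁ s₂ hs₂ hs)
  · rw [div_le_iff₀ (by positivity)]
    calc ε₀ ≤ ‖ψ (t + μ j) - ψ t‖ := hsep j t ht
      _ ≤ K' * ‖f (ψ (t + μ j)) - f (ψ t)‖ := by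
        simpa only [dist_eq_norm] using hf'.le_mul_dist (ψ (t + μ j)) (ψ t)
      _ ≤ ‖f (ψ (t + μ j)) - f (ψ t)‖ * (K' + 1) := by
        rw [mul_comm]; gcongr; exact le_add_of_nonneg_right zero_le_one

theorem Unpredictable.comp {ψ : ℝ → EuclideanSpace ℝ (Fin m)} (hψ : Unpredictable m θ ψ)
    {f : EuclideanSpace ℝ (Fin m) → EuclideanSpace ℝ (Fin n)} {K K' : NNReal}
    (hf : LipschitzWith K f) (hf' : AntilipschitzWith K' f) : Unpredictable n θ (f ∘ ψ) :=
  let ⟨hbpc, _, _, _, _, hwith⟩ := hψ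
  ⟨hbpc.comp_lipschitzWith hf, _, _, _, _, hwith.comp hf hf'⟩

theorem AsympUnpredictable.comp {φ : ℝ → EuclideanSpace ℝ (Fin m)}
    (hφ : AsympUnpredictable m θ φ) {f : EuclideanSpace ℝ (Fin m) → EuclideanSpace ℝ (Fin n)}
    {K K' : NNReal} (hf : LipschitzWith K f) (hf' : AntilipschitzWith K' f) :
    AsympUnpredictable n θ (f ∘ φ) := by
  obtain ⟨hφbpc, ψ, ξ, hψ, -, hξ, hsum⟩ := hφ
  have hdecay : ∀ t, ‖f (φ t) - f (ψ t)‖ ≤ K * ‖ξ t‖ := fun t => by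
    simpa only [dist_eq_norm, hsum, add_sub_cancel_left] using hf.dist_le_mul (φ t) (ψ t)
  refine ⟨hφbpc.comp_lipschitzWith hf, f ∘ ψ, f ∘ φ - f ∘ ψ, hψ.comp hf hf',
    (hφbpc.comp_lipschitzWith hf).sub (hψ.1.comp_lipschitzWith hf), ?_, fun t => ?_⟩
  · simpa using squeeze_zero (fun t => norm_nonneg _) hdecay (by simpa using hξ.const_mul (K : ℝ))
  · simp

end

theorem statement0_general (m : ℕ) (θ : ℤ → ℝ) (φ : ℝ → EuclideanSpace ℝ (Fin m))
    (hφ : AsympUnpredictable m θ φ)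
    (c : EuclideanSpace ℝ (Fin m)) (Ω : Matrix (Fin m) (Fin m) ℝ) (hΩ : IsUnit Ω) :
    BPC m θ (fun t => Matrix.toEuclideanCLM (𝕜 := ℝ) Ω (φ t) + c) ∧
    AsympUnpredictable m θ (fun t => Matrix.toEuclideanCLM (𝕜 := ℝ) Ω (φ t) + c) := by
  let e := ContinuousLinearEquiv.unitsEquiv ℝ _ (hΩ.map (Matrix.toEuclideanCLM (𝕜 := ℝ))).unit
  have hasymp := hφ.comp ((isometry_add_right c).lipschitz.comp e.lipschitz)
    ((isometry_add_right c).antilipschitz.comp e.antilipschitz)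
  exact ⟨hasymp.1, hasymp⟩

/-- Lemma 2.1: if `φ ∈ ℬ𝒫𝒞(θ)` is asymptotically unpredictable, then for every
vector `c` and every non-singular matrix `Ω` (spectral norm / Euclidean action), the function
`t ↦ Ω φ t + c` belongs to `ℬ𝒫𝒞(θ)` and is asymptotically unpredictable. -/
theorem statement0 (m p : ℕ) (hp : 1 ≤ p) (ω : ℝ) (hω : 0 < ω) (θ : ℤ → ℝ)
    (hθ : SSeq p ω θ) (φ : ℝ → EuclideanSpace ℝ (Fin m))
    (hφ : AsympUnpredictable m θ φ)
    (c : EuclideanSpace ℝ (Fin m)) (Ω : Matrix (Fin m) (Fin m) ℝ) (hΩ : IsUnit Ω) :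
    BPC m θ (fun t => Matrix.toEuclideanCLM (𝕜 := ℝ) Ω (φ t) + c) ∧
    AsympUnpredictable m θ (fun t => Matrix.toEuclideanCLM (𝕜 := ℝ) Ω (φ t) + c) :=
  statement0_general m θ φ hφ c Ω hΩ
end
end

section
/- Let p ∈ ℕ with p ≥ 1, ω > 0, and θ ∈ 𝒮(p,ω). Suppose φ ∈ ℬ𝒫𝒞(θ) is an asymptotically unpredictable function with values in ℝ^m. If η ∈ ℬ𝒫𝒞(θ) is a function such that the limit lim_{t→∞} η(t) exists in ℝ^m, then the function φ̃ defined by φ̃(t) = φ(t) + η(t) belongs to ℬ𝒫𝒞(θ) and is asymptotically unpredictable. -/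
open Filter Topology

noncomputable section

lemma bpc_add (m : ℕ) (θ : ℤ → ℝ) (f g : ℝ → EuclideanSpace ℝ (Fin m))
    (hf : BPC m θ f) (hg : BPC m θ g) : BPC m θ (fun t => f t + g t) := by
  obtain ⟨⟨M, hM⟩, hc, hr, hl⟩ := hf
  obtain ⟨⟨N, hN⟩, hc', hr', hl'⟩ := hg
  refine ⟨⟨M + N, fun t => (norm_add_le _ _).trans (add_le_add (hM t) (hN t))⟩,
    fun k => (hc k).add (hc' k), fun k => ?_, fun k => (hl k).add (hl' k)⟩
  obtain ⟨L, hL⟩ := hr k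
  obtain ⟨L', hL'⟩ := hr' k
  exact ⟨L + L', hL.add hL'⟩

lemma bpc_const (m : ℕ) (θ : ℤ → ℝ) (c : EuclideanSpace ℝ (Fin m)) :
    BPC m θ (fun _ => c) :=
  ⟨⟨‖c‖, fun _ => le_rfl⟩, fun _ => continuousOn_const, fun _ => ⟨c, tendsto_const_nhds⟩,
    fun _ => tendsto_const_nhds⟩

lemma unpred_add_const (m : ℕ) (θ : ℤ → ℝ) (ψ : ℝ → EuclideanSpace ℝ (Fin m))
    (hψ : Unpredictable m θ ψ) (c : EuclideanSpace ℝ (Fin m)) :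
    Unpredictable m θ (fun t => ψ t + c) := by
  obtain ⟨hb, ε₀, ν, μ, τ, h1, h2, h3, h4, h5, h6, h7⟩ := hψ
  refine ⟨bpc_add m θ ψ _ hb (bpc_const m θ c), ε₀, ν, μ, τ, h1, h2, h3, h4, ?_, ?_, ?_⟩
  · intro ε hε
    obtain ⟨δ, hδ, hδ'⟩ := h5 ε hε
    refine ⟨δ, hδ, fun k s₁ hs₁ s₂ hs₂ hd => ?_⟩
    simpa [add_sub_add_right_eq_sub] using hδ' k s₁ hs₁ s₂ hs₂ hd
  · intro C hC
    have := (h6 C hC).add ((tendsto_const_nhds (x := c)).tendstoUniformlyOn_const C)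
    exact this
  · intro n t ht
    simpa [add_sub_add_right_eq_sub] using h7 n t ht

theorem statement2' (m p : ℕ) (hp : 1 ≤ p) (ω : ℝ) (hω : 0 < ω) (θ : ℤ → ℝ)
    (hθ : SSeq p ω θ) (φ : ℝ → EuclideanSpace ℝ (Fin m))
    (hφ : AsympUnpredictable m θ φ)
    (η : ℝ → EuclideanSpace ℝ (Fin m)) (hη : BPC m θ η)
    (η₀ : EuclideanSpace ℝ (Fin m)) (hlim : Tendsto η atTop (nhds η₀)) :
    BPC m θ (fun t => φ t + η t) ∧ AsympUnpredictable m θ (fun t => φ t + η t) := by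
  obtain ⟨hbφ, ψ, ξ, hψ, hbξ, hξ0, hdec⟩ := hφ
  have hbpc : BPC m θ (fun t => φ t + η t) := bpc_add m θ φ η hbφ hη
  refine ⟨hbpc, hbpc, fun t => ψ t + η₀, fun t => ξ t + (η t + -η₀),
    unpred_add_const m θ ψ hψ η₀,
    bpc_add m θ ξ _ hbξ (bpc_add m θ η _ hη (bpc_const m θ (-η₀))), ?_, ?_⟩
  · have hξ : Tendsto ξ atTop (nhds 0) := by
      rwa [← tendsto_zero_iff_norm_tendsto_zero] at hξ0
    have h2 : Tendsto (fun t => η t + -η₀) atTop (nhds 0) := by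
      simpa using hlim.add (tendsto_const_nhds (x := -η₀))
    have := hξ.add h2
    rw [add_zero] at this
    exact tendsto_zero_iff_norm_tendsto_zero.mp this
  · intro t
    show φ t + η t = (ψ t + η₀) + (ξ t + (η t + -η₀))
    rw [hdec t]; abel

/-- Lemma 2.2: if `φ ∈ ℬ𝒫𝒞(θ)` is asymptotically unpredictable and
`η ∈ ℬ𝒫𝒞(θ)` has a limit as `t → ∞`, then `t ↦ φ t + η t` belongs to `ℬ𝒫𝒞(θ)` and is
asymptotically unpredictable. -/
theorem statement2 (m p : ℕ) (hp : 1 ≤ p) (ω : ℝ) (hω : 0 < ω) (θ : ℤ → ℝ)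
    (hθ : SSeq p ω θ) (φ : ℝ → EuclideanSpace ℝ (Fin m))
    (hφ : AsympUnpredictable m θ φ)
    (η : ℝ → EuclideanSpace ℝ (Fin m)) (hη : BPC m θ η)
    (η₀ : EuclideanSpace ℝ (Fin m)) (hlim : Tendsto η atTop (nhds η₀)) :
    BPC m θ (fun t => φ t + η t) ∧ AsympUnpredictable m θ (fun t => φ t + η t) :=
  statement2' m p hp ω hω θ hθ φ hφ η hη η₀ hlim
end
end

section
/- Let p ∈ ℕ with p ≥ 1, ω > 0, and θ ∈ 𝒮(p,ω). Suppose φ ∈ ℬ𝒫𝒞(θ) is an asymptotically unpredictable function with values in ℝ^m. Then for every real number c, the function φ̃ : ℝ → ℝ^m defined by φ̃(t) = φ(t + c) is asymptotically unpredictable as an element of ℬ𝒫𝒞(θ̃), where θ̃ = {θ̃_k}_{k∈ℤ} is the sequence defined by θ̃_k = θ_k − c for all k ∈ ℤ; in particular θ̃ ∈ 𝒮(p,ω). -/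
open Filter Topology

noncomputable section

/-- Translation maps the punctured right/left neighborhood filters appropriately. -/
lemma tendsto_shift_within (a c : ℝ) (s : Set ℝ) :
    Tendsto (fun t : ℝ => t + c) (nhdsWithin (a - c) ((fun x => x - c) '' s))
      (nhdsWithin a s) := by
  apply tendsto_nhdsWithin_of_tendsto_nhds_of_eventually_within
  · have h1 : Tendsto (fun t : ℝ => t + c) (nhds (a - c)) (nhds (a - c + c)) :=
      (continuous_id.add continuous_const).tendsto _
    have h2 : Tendsto (fun t : ℝ => t + c) (nhds (a - c)) (nhds a) := by simpa using h1
    exact h2.mono_left nhdsWithin_le_nhds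
  · filter_upwards [self_mem_nhdsWithin] with t ht
    rcases ht with ⟨x, hx, rfl⟩
    simpa using hx

lemma bpc_shift (m : ℕ) (θ : ℤ → ℝ) (φ : ℝ → EuclideanSpace ℝ (Fin m)) (c : ℝ)
    (h : BPC m θ φ) : BPC m (fun k => θ k - c) (fun t => φ (t + c)) := by
  obtain ⟨⟨M, hM⟩, hcont, hright, hleft⟩ := h
  have himg : ∀ s : Set ℝ, ((fun x => x - c) '' s) = (fun t : ℝ => t + c) ⁻¹' s := by
    intro s
    ext x
    constructor
    · rintro ⟨y, hy, rfl⟩; simpa using hy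
    · intro hx; exact ⟨x + c, hx, by ring⟩
  refine ⟨⟨M, fun t => hM (t + c)⟩, ?_, ?_, ?_⟩
  · intro k
    have hmaps : Set.MapsTo (fun t : ℝ => t + c)
        (Set.Ioo (θ (k - 1) - c) (θ k - c)) (Set.Ioo (θ (k - 1)) (θ k)) := by
      intro t ht
      simp only [Set.mem_Ioo] at ht ⊢
      constructor <;> linarith [ht.1, ht.2]
    exact (hcont k).comp ((continuous_id.add continuous_const).continuousOn) hmaps
  · intro k
    obtain ⟨L, hL⟩ := hright k
    refine ⟨L, hL.comp ?_⟩
    have := tendsto_shift_within (θ k) c (Set.Ioi (θ k))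
    have himg2 : ((fun x : ℝ => x - c) '' Set.Ioi (θ k)) = Set.Ioi (θ k - c) := by
      rw [himg]; ext x
      simp only [Set.mem_preimage, Set.mem_Ioi]
      constructor <;> intro h <;> linarith
    rwa [himg2] at this
  · intro k
    have := tendsto_shift_within (θ k) c (Set.Iio (θ k))
    have himg2 : ((fun x : ℝ => x - c) '' Set.Iio (θ k)) = Set.Iio (θ k - c) := by
      rw [himg]; ext x
      simp only [Set.mem_preimage, Set.mem_Iio]
      constructor <;> intro h <;> linarith
    rw [himg2] at this
    have h2 := (hleft k).comp this
    simpa [sub_add_cancel, Function.comp_def] using h2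

/-- Lemma 2.3: if `φ ∈ ℬ𝒫𝒞(θ)` is asymptotically unpredictable, then for every
real `c` the shifted function `t ↦ φ (t + c)` is asymptotically unpredictable as an element of
`ℬ𝒫𝒞(θ̃)`, where `θ̃ k = θ k - c`; in particular `θ̃ ∈ 𝒮(p,ω)`. -/
theorem statement3 (m p : ℕ) (hp : 1 ≤ p) (ω : ℝ) (hω : 0 < ω) (θ : ℤ → ℝ)
    (hθ : SSeq p ω θ) (φ : ℝ → EuclideanSpace ℝ (Fin m))
    (hφ : AsympUnpredictable m θ φ) (c : ℝ) :
    SSeq p ω (fun k => θ k - c) ∧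
    AsympUnpredictable m (fun k => θ k - c) (fun t => φ (t + c)) := by
  obtain ⟨hmono, htend, hper⟩ := hθ
  obtain ⟨hbpc, ψ, ξ, ⟨hψbpc, ε₀, ν, μ, τ, hε₀, hν, hμ, hτ, hcont, hunif, hsep⟩,
    hξbpc, hξ0, hsum⟩ := hφ
  constructor
  · refine ⟨fun a b hab => by simpa using hmono hab, ?_, fun k => by simp [hper k]; ring⟩
    have hmono2 : ∀ k : ℤ, |θ k| - |c| ≤ |θ k - c| := fun k => by
      have := abs_sub_abs_le_abs_sub (θ k) c
      linarith
    exact tendsto_atTop_mono hmono2 (tendsto_atTop_add_const_right _ _ htend)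
  · refine ⟨bpc_shift m θ φ c hbpc, fun t => ψ (t + c), fun t => ξ (t + c),
      ⟨bpc_shift m θ ψ c hψbpc, ε₀, ν, μ, fun n => τ n - c, hε₀, hν, hμ,
        tendsto_atTop_add_const_right _ _ hτ, ?_, ?_, ?_⟩,
      bpc_shift m θ ξ c hξbpc, ?_, fun t => hsum (t + c)⟩
    · intro ε hε
      obtain ⟨δ, hδ, hd⟩ := hcont ε hε
      refine ⟨δ, hδ, fun k s₁ hs₁ s₂ hs₂ hss => ?_⟩
      simp only [Set.mem_Ioo] at hs₁ hs₂
      have h1 : s₁ + c ∈ Set.Ioo (θ (k - 1)) (θ k) := ⟨by linarith [hs₁.1], by linarith [hs₁.2]⟩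
      have h2 : s₂ + c ∈ Set.Ioo (θ (k - 1)) (θ k) := ⟨by linarith [hs₂.1], by linarith [hs₂.2]⟩
      have : |s₁ + c - (s₂ + c)| < δ := by
        rw [show s₁ + c - (s₂ + c) = s₁ - s₂ by ring]; exact hss
      exact hd k _ h1 _ h2 this
    · intro C hC
      have hC' : IsCompact ((fun t : ℝ => t + c) '' C) :=
        hC.image (continuous_id.add continuous_const)
      have h := (hunif _ hC').comp (fun t : ℝ => t + c)
      have hsub : C ⊆ (fun t : ℝ => t + c) ⁻¹' ((fun t : ℝ => t + c) '' C) :=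
        Set.subset_preimage_image _ _
      have h2 := h.mono hsub
      have heq : (fun n => (fun t => ψ (t + μ n)) ∘ (fun t : ℝ => t + c)) =
          fun n t => ψ (t + c + μ n) := by
        funext n t; simp [Function.comp]
      rw [heq] at h2
      have heq2 : (fun (n : ℕ) (t : ℝ) => ψ (t + μ n + c)) = fun n t => ψ (t + c + μ n) := by
        funext n t; ring_nf
      rw [heq2]
      exact h2
    · intro n t ht
      simp only [Set.mem_Icc] at ht
      have ht' : t + c ∈ Set.Icc (τ n - ν) (τ n + ν) :=
        ⟨by linarith [ht.1], by linarith [ht.2]⟩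
      have := hsep n (t + c) ht'
      rwa [show t + c + μ n = t + μ n + c by ring] at this
    · exact hξ0.comp (tendsto_atTop_add_const_right _ _ tendsto_id)
end
end

section
/- Let p ∈ ℕ with p ≥ 1, ω > 0, and θ ∈ 𝒮(p,ω). Suppose ψ ∈ ℬ𝒫𝒞(θ) is an unpredictable function with values in ℝ^m satisfying sup_{t∈ℝ} ‖ψ(t)‖ ≤ H for some H > 0, and suppose ξ ∈ ℬ𝒫𝒞(θ) satisfies ‖ξ(t)‖ → 0 as t → ∞ and ‖ξ(t₀)‖ ≥ 4H for some t₀ ∈ ℝ. Then the function φ ∈ ℬ𝒫𝒞(θ) defined by φ(t) = ψ(t) + ξ(t) is asymptotically unpredictable but is NOT unpredictable; that is, there do not exist positive numbers ε₀, ν and sequences {μ_n}, {τ_n} of real numbers diverging to +∞ satisfying conditions (i)–(iii) of the definition of an unpredictable function for φ. -/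
open Filter Topology

noncomputable section

/-- Lemma 2.4, first case: if `ψ ∈ ℬ𝒫𝒞(θ)` is unpredictable with
`sup ‖ψ‖ ≤ H`, and `ξ ∈ ℬ𝒫𝒞(θ)` satisfies `‖ξ t‖ → 0` as `t → ∞` and `‖ξ t₀‖ ≥ 4H` for
some `t₀`, then `φ = ψ + ξ` is asymptotically unpredictable but not unpredictable. -/
theorem statement5 (m p : ℕ) (hp : 1 ≤ p) (ω : ℝ) (hω : 0 < ω) (θ : ℤ → ℝ)
    (hθ : SSeq p ω θ) (ψ : ℝ → EuclideanSpace ℝ (Fin m))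
    (H : ℝ) (hH : 0 < H) (hbound : ∀ t : ℝ, ‖ψ t‖ ≤ H)
    (hψ : Unpredictable m θ ψ)
    (ξ : ℝ → EuclideanSpace ℝ (Fin m)) (hξBPC : BPC m θ ξ)
    (hξ0 : Tendsto (fun t => ‖ξ t‖) atTop (nhds (0 : ℝ)))
    (t₀ : ℝ) (ht₀ : 4 * H ≤ ‖ξ t₀‖) :
    AsympUnpredictable m θ (fun t => ψ t + ξ t) ∧
    ¬ Unpredictable m θ (fun t => ψ t + ξ t) := by
  have hBPCsum : BPC m θ (fun t => ψ t + ξ t) := by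
    obtain ⟨⟨M₁, hM₁⟩, hc₁, hr₁, hl₁⟩ := hψ.1
    obtain ⟨⟨M₂, hM₂⟩, hc₂, hr₂, hl₂⟩ := hξBPC
    refine ⟨⟨M₁ + M₂, fun t => (norm_add_le _ _).trans (add_le_add (hM₁ t) (hM₂ t))⟩,
      fun k => (hc₁ k).add (hc₂ k), fun k => ?_, fun k => (hl₁ k).add (hl₂ k)⟩
    obtain ⟨L₁, hL₁⟩ := hr₁ k
    obtain ⟨L₂, hL₂⟩ := hr₂ k
    exact ⟨L₁ + L₂, hL₁.add hL₂⟩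
  constructor
  · exact ⟨hBPCsum, ψ, ξ, hψ, hξBPC, hξ0, fun t => rfl⟩
  · rintro ⟨-, ε₀, ν, μ, τ, -, -, hμ, -, -, hunif, -⟩
    set φ : ℝ → EuclideanSpace ℝ (Fin m) := fun t => ψ t + ξ t with hφ
    have hmem : t₀ ∈ ({t₀} : Set ℝ) := rfl
    have h1 : Tendsto (fun n => φ (t₀ + μ n)) atTop (nhds (φ t₀)) :=
      (hunif {t₀} isCompact_singleton).tendsto_at hmem
    have h2 : Tendsto (fun n => ‖φ (t₀ + μ n)‖) atTop (nhds ‖φ t₀‖) := h1.norm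
    have h3 : Tendsto (fun n => H + ‖ξ (t₀ + μ n)‖) atTop (nhds (H + 0)) :=
      tendsto_const_nhds.add (hξ0.comp (tendsto_atTop_add_const_left _ t₀ hμ))
    have h4 : ‖φ t₀‖ ≤ H + 0 := by
      refine le_of_tendsto_of_tendsto h2 h3 (Eventually.of_forall fun n => ?_)
      exact (norm_add_le _ _).trans (add_le_add (hbound _) le_rfl)
    have h5 : 3 * H ≤ ‖φ t₀‖ := by
      have : ‖ξ t₀‖ ≤ ‖ψ t₀ + ξ t₀‖ + ‖ψ t₀‖ := by
        calc ‖ξ t₀‖ = ‖(ψ t₀ + ξ t₀) - ψ t₀‖ := by rw [add_sub_cancel_left]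
        _ ≤ _ := norm_sub_le _ _
      have h6 := hbound t₀
      simp only [hφ]
      linarith
    linarith
end
end

section
/- Let p ∈ ℕ with p ≥ 1, ω > 0, and θ ∈ 𝒮(p,ω). Suppose ψ ∈ ℬ𝒫𝒞(θ) is an unpredictable function with values in ℝ^m satisfying sup_{t∈ℝ} ‖ψ(t)‖ ≤ H for some H > 0, and suppose ξ ∈ ℬ𝒫𝒞(θ) satisfies ‖ξ(t)‖ → 0 as t → ∞ and ‖ξ(θ_{k₀}+)‖ > 4H for some k₀ ∈ ℤ, where ξ(θ_{k₀}+) denotes the right limit of ξ at θ_{k₀}. Then the function φ ∈ ℬ𝒫𝒞(θ) defined by φ(t) = ψ(t) + ξ(t) is asymptotically unpredictable but is NOT unpredictable; that is, there do not exist positive numbers ε₀, ν and sequences {μ_n}, {τ_n} of real numbers diverging to +∞ satisfying conditions (i)–(iii) of the definition of an unpredictable function for φ. -/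
open Filter Topology

noncomputable section

/-!
Unpredictability forces recurrence: along the shifts `μ n → ∞`, `φ (s + μ n) → φ s` at every
point `s`. For `φ = ψ + ξ` the values far out satisfy `‖φ‖ ≤ H + ‖ξ‖ → H`, so an unpredictable
`φ` would be bounded by `H` everywhere. Just to the right of `θ k₀`, however, `‖ξ‖ > 4H`, hence
`‖φ‖ ≥ ‖ξ‖ - ‖ψ‖ > 3H`.
-/

theorem BPC.add {m : ℕ} {θ : ℤ → ℝ} {f g : ℝ → EuclideanSpace ℝ (Fin m)}
    (hf : BPC m θ f) (hg : BPC m θ g) : BPC m θ (fun t => f t + g t) := by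
  obtain ⟨⟨Mf, hMf⟩, hcf, hrf, hlf⟩ := hf
  obtain ⟨⟨Mg, hMg⟩, hcg, hrg, hlg⟩ := hg
  refine ⟨⟨Mf + Mg, fun t => (norm_add_le _ _).trans (add_le_add (hMf t) (hMg t))⟩,
    fun k => (hcf k).add (hcg k), fun k => ?_, fun k => (hlf k).add (hlg k)⟩
  obtain ⟨Lf, hLf⟩ := hrf k
  obtain ⟨Lg, hLg⟩ := hrg k
  exact ⟨Lf + Lg, hLf.add hLg⟩

theorem norm_le_of_tendsto_comp_add {E ι : Type*} [SeminormedAddCommGroup E] {l : Filter ι}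
    [l.NeBot] {φ ξ : ℝ → E} {H : ℝ} (hφ : ∀ t, ‖φ t‖ ≤ H + ‖ξ t‖)
    (hξ : Tendsto (fun t => ‖ξ t‖) atTop (𝓝 0)) {μ : ι → ℝ} (hμ : Tendsto μ l atTop) {s : ℝ}
    (hs : Tendsto (fun n => φ (s + μ n)) l (𝓝 (φ s))) : ‖φ s‖ ≤ H := by
  have hshift : Tendsto (fun n => s + μ n) l atTop := tendsto_atTop_add_const_left l s hμ
  have hbound : Tendsto (fun n => H + ‖ξ (s + μ n)‖) l (𝓝 (H + 0)) :=
    tendsto_const_nhds.add (hξ.comp hshift)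
  simpa using le_of_tendsto_of_tendsto' hs.norm hbound fun n => hφ (s + μ n)

theorem UnpredictableWith.tendsto_comp_add {m : ℕ} {θ : ℤ → ℝ}
    {φ : ℝ → EuclideanSpace ℝ (Fin m)} {ε₀ ν : ℝ} {μ τ : ℕ → ℝ}
    (h : UnpredictableWith m θ φ ε₀ ν μ τ) (s : ℝ) :
    Tendsto (fun n => φ (s + μ n)) atTop (𝓝 (φ s)) :=
  (h.2.2.2.2.2.1 {s} isCompact_singleton).tendsto_at rfl

theorem Unpredictable.norm_le_of_norm_le_add {m : ℕ} {θ : ℤ → ℝ}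
    {φ ξ : ℝ → EuclideanSpace ℝ (Fin m)} {H : ℝ} (h : Unpredictable m θ φ)
    (hφ : ∀ t, ‖φ t‖ ≤ H + ‖ξ t‖) (hξ : Tendsto (fun t => ‖ξ t‖) atTop (𝓝 0)) (s : ℝ) :
    ‖φ s‖ ≤ H := by
  obtain ⟨-, ε₀, ν, μ, τ, hu⟩ := h
  exact norm_le_of_tendsto_comp_add hφ hξ hu.2.2.1 (hu.tendsto_comp_add s)

theorem statement6_general (m : ℕ) (θ : ℤ → ℝ)
    (ψ : ℝ → EuclideanSpace ℝ (Fin m))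
    (H : ℝ) (hbound : ∀ t : ℝ, ‖ψ t‖ ≤ H)
    (hψ : Unpredictable m θ ψ)
    (ξ : ℝ → EuclideanSpace ℝ (Fin m)) (hξBPC : BPC m θ ξ)
    (hξ0 : Tendsto (fun t => ‖ξ t‖) atTop (nhds (0 : ℝ)))
    (k₀ : ℤ) (L : EuclideanSpace ℝ (Fin m))
    (hL : Tendsto ξ (nhdsWithin (θ k₀) (Set.Ioi (θ k₀))) (nhds L))
    (hLnorm : 4 * H < ‖L‖) :
    AsympUnpredictable m θ (fun t => ψ t + ξ t) ∧
    ¬ Unpredictable m θ (fun t => ψ t + ξ t) := by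
  refine ⟨⟨hψ.1.add hξBPC, ψ, ξ, hψ, hξBPC, hξ0, fun t => rfl⟩, fun hφ => ?_⟩
  obtain ⟨s, hs⟩ := (hL.norm.eventually (eventually_gt_nhds hLnorm)).exists
  have hφs : ‖ψ s + ξ s‖ ≤ H := hφ.norm_le_of_norm_le_add
    (fun t => (norm_add_le _ _).trans (add_le_add_left (hbound t) _)) hξ0 s
  have hξs : ‖ξ s‖ ≤ ‖ψ s + ξ s‖ + ‖ψ s‖ := by
    simpa using norm_sub_le (ψ s + ξ s) (ψ s)
  linarith [hbound s, (norm_nonneg (ψ 0)).trans (hbound 0)]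

/-- Lemma 2.4, second case: if `ψ ∈ ℬ𝒫𝒞(θ)` is unpredictable with
`sup ‖ψ‖ ≤ H`, and `ξ ∈ ℬ𝒫𝒞(θ)` satisfies `‖ξ t‖ → 0` as `t → ∞` and the right limit
`ξ(θ k₀ +)` has norm `> 4H` for some `k₀`, then `φ = ψ + ξ` is asymptotically unpredictable
but not unpredictable. -/
theorem statement6 (m p : ℕ) (hp : 1 ≤ p) (ω : ℝ) (hω : 0 < ω) (θ : ℤ → ℝ)
    (hθ : SSeq p ω θ) (ψ : ℝ → EuclideanSpace ℝ (Fin m))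
    (H : ℝ) (hH : 0 < H) (hbound : ∀ t : ℝ, ‖ψ t‖ ≤ H)
    (hψ : Unpredictable m θ ψ)
    (ξ : ℝ → EuclideanSpace ℝ (Fin m)) (hξBPC : BPC m θ ξ)
    (hξ0 : Tendsto (fun t => ‖ξ t‖) atTop (nhds (0 : ℝ)))
    (k₀ : ℤ) (L : EuclideanSpace ℝ (Fin m))
    (hL : Tendsto ξ (nhdsWithin (θ k₀) (Set.Ioi (θ k₀))) (nhds L))
    (hLnorm : 4 * H < ‖L‖) :
    AsympUnpredictable m θ (fun t => ψ t + ξ t) ∧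
    ¬ Unpredictable m θ (fun t => ψ t + ξ t) :=
  statement6_general m θ ψ H hbound hψ ξ hξBPC hξ0 k₀ L hL hLnorm
end
end

section
/- Let p ∈ ℕ with p ≥ 1, ω > 0, and θ ∈ 𝒮(p,ω). Let {α_k}_{k∈ℤ} be an unpredictable sequence in ℝ^m with unpredictability constant υ₀ > 0 and sequences {q_n}_{n∈ℕ}, {r_n}_{n∈ℕ} of positive integers diverging to ∞. Define ψ : ℝ → ℝ^m by ψ(t) = α_k for t ∈ (θ_{kp}, θ_{(k+1)p}], k ∈ ℤ. Then ψ belongs to ℬ𝒫𝒞(θ) and ψ is an unpredictable function; more precisely, conditions (i)–(iii) of the definition of an unpredictable function hold for ψ with unpredictability constant ε₀ = υ₀, ν = ω/4, μ_n = ω q_n, and τ_n = θ_{r_n p} + ω/2. -/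
open Filter Topology

noncomputable section

/-- Definition 3.1 with explicit data: an unpredictable sequence with unpredictability
constant `υ₀` and sequences `q, r` of positive integers diverging to `∞`. -/
def UnpredictableSeqWith (m : ℕ) (α : ℤ → EuclideanSpace ℝ (Fin m))
    (υ₀ : ℝ) (q r : ℕ → ℕ) : Prop :=
  0 < υ₀ ∧ (∀ n, 0 < q n) ∧ (∀ n, 0 < r n) ∧
  Tendsto q atTop atTop ∧ Tendsto r atTop atTop ∧
  (∀ k : ℤ, Tendsto (fun n => ‖α (k + (q n : ℤ)) - α k‖) atTop (nhds (0 : ℝ))) ∧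
  (∀ n : ℕ, υ₀ ≤ ‖α ((q n : ℤ) + (r n : ℤ)) - α ((r n : ℤ))‖)

/-- Definition 3.1: an unpredictable (bounded) sequence in `ℝ^m`. -/
def UnpredictableSeq (m : ℕ) (α : ℤ → EuclideanSpace ℝ (Fin m)) : Prop :=
  (∃ M : ℝ, ∀ k : ℤ, ‖α k‖ ≤ M) ∧ ∃ υ₀ : ℝ, ∃ q r : ℕ → ℕ, UnpredictableSeqWith m α υ₀ q r

/-- Definition 3.2: an asymptotically unpredictable (bounded) sequence in `ℝ^m`. -/
def AsympUnpredictableSeq (m : ℕ) (σ : ℤ → EuclideanSpace ℝ (Fin m)) : Prop :=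
  (∃ M : ℝ, ∀ k : ℤ, ‖σ k‖ ≤ M) ∧ ∃ α β : ℤ → EuclideanSpace ℝ (Fin m),
    UnpredictableSeq m α ∧ Tendsto (fun k : ℤ => ‖β k‖) atTop (nhds (0 : ℝ)) ∧
    ∀ k : ℤ, σ k = α k + β k

/-- if `{α k}` is an unpredictable sequence (bounded, with data `υ₀, q, r`) and
`ψ(t) = α k` for `t ∈ (θ (kp), θ ((k+1)p)]`, then `ψ ∈ ℬ𝒫𝒞(θ)` and `ψ` is unpredictable
with `ε₀ = υ₀`, `ν = ω/4`, `μ n = ω * q n`, and `τ n = θ (r n * p) + ω/2`. -/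
theorem statement7 (m p : ℕ) (hp : 1 ≤ p) (ω : ℝ) (hω : 0 < ω) (θ : ℤ → ℝ)
    (hθ : SSeq p ω θ) (α : ℤ → EuclideanSpace ℝ (Fin m))
    (hαbdd : ∃ M : ℝ, ∀ k : ℤ, ‖α k‖ ≤ M)
    (υ₀ : ℝ) (q r : ℕ → ℕ) (hα : UnpredictableSeqWith m α υ₀ q r)
    (ψ : ℝ → EuclideanSpace ℝ (Fin m))
    (hψdef : ∀ k : ℤ, ∀ t ∈ Set.Ioc (θ (k * (p : ℤ))) (θ ((k + 1) * (p : ℤ))), ψ t = α k) :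
    BPC m θ ψ ∧
    UnpredictableWith m θ ψ υ₀ (ω / 4) (fun n => ω * (q n : ℝ))
      (fun n => θ ((r n : ℤ) * (p : ℤ)) + ω / 2) := by

  obtain ⟨hmono, htop, hper⟩ := hθ
  obtain ⟨hυ, hqpos, hrpos, hqtop, hrtop, hconv, hsep⟩ := hα
  obtain ⟨M, hM⟩ := hαbdd
  have hp' : (0:ℤ) < (p:ℤ) := by exact_mod_cast hp
  -- θ (k*p) = θ 0 + k*ω
  have hA : ∀ k : ℤ, θ (k * (p:ℤ)) = θ 0 + (k:ℝ) * ω := by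
    intro k
    induction k using Int.induction_on with
    | zero => simp
    | succ k ih =>
      have he : ((k:ℤ) + 1) * (p:ℤ) = k * p + p := by ring
      rw [he, hper, ih]; push_cast; ring
    | pred k ih =>
      have h := hper ((-(k:ℤ) - 1) * p)
      have he : (-(k:ℤ) - 1) * (p:ℤ) + p = -(k:ℤ) * p := by ring
      rw [he, ih] at h
      push_cast at h
      have : θ ((-(k:ℤ) - 1) * (p:ℤ)) = θ 0 + (-(k:ℝ)) * ω - ω := by linarith
      rw [this]; push_cast; ring
  have hψ' : ∀ (k : ℤ) (t : ℝ), θ 0 + (k:ℝ) * ω < t → t ≤ θ 0 + ((k:ℝ) + 1) * ω →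
      ψ t = α k := by
    intro k t h1 h2
    apply hψdef k t
    constructor
    · rw [hA k]; exact h1
    · rw [hA (k+1)]; push_cast; linarith
  have hex : ∀ t : ℝ, ∃ k : ℤ, θ 0 + (k:ℝ) * ω < t ∧ t ≤ θ 0 + ((k:ℝ) + 1) * ω := by
    intro t
    set c : ℝ := (t - θ 0) / ω with hc
    refine ⟨⌈c⌉ - 1, ?_, ?_⟩
    · have h1 : ((⌈c⌉:ℝ) - 1) < c := by linarith [Int.ceil_lt_add_one c]
      have := (lt_div_iff₀ hω).mp h1
      push_cast; linarith
    · have h2 : c ≤ (⌈c⌉:ℝ) := Int.le_ceil c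
      have := (div_le_iff₀ hω).mp h2
      push_cast; linarith
  have hdiv : ∀ a : ℤ, (a / (p:ℤ)) * p ≤ a ∧ a < (a / (p:ℤ) + 1) * p := by
    intro a
    have e := Int.mul_ediv_add_emod a (p:ℤ)
    have m1 := Int.emod_nonneg a (ne_of_gt hp')
    have m2 := Int.emod_lt_of_pos a hp'
    have hc1 : (a / (p:ℤ)) * p = p * (a / (p:ℤ)) := mul_comm _ _
    have hc2 : (a / (p:ℤ) + 1) * p = p * (a / (p:ℤ)) + p := by ring
    exact ⟨by linarith, by linarith⟩
  have hconst : ∀ k : ℤ, ∃ j : ℤ, ∀ t ∈ Set.Ioo (θ (k-1)) (θ k), ψ t = α j := by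
    intro k
    obtain ⟨h1, h2⟩ := hdiv (k - 1)
    have h2' : k ≤ ((k-1) / (p:ℤ) + 1) * p := by
      have := Int.add_one_le_iff.mpr h2
      linarith
    refine ⟨(k-1) / (p:ℤ), fun t ht => ?_⟩
    exact hψdef _ t ⟨lt_of_le_of_lt (hmono.monotone h1) ht.1,
      le_trans (le_of_lt ht.2) (hmono.monotone h2')⟩
  constructor
  · refine ⟨⟨M, fun t => ?_⟩, fun k => ?_, fun k => ?_, fun k => ?_⟩
    · obtain ⟨k, hk1, hk2⟩ := hex t
      rw [hψ' k t hk1 hk2]; exact hM k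
    · obtain ⟨j, hj⟩ := hconst k
      exact continuousOn_const.congr fun t ht => hj t ht
    · obtain ⟨h1, h2⟩ := hdiv k
      refine ⟨α (k / (p:ℤ)), ?_⟩
      have hlt : θ k < θ ((k / (p:ℤ) + 1) * p) := hmono h2
      have hmem : Set.Iio (θ ((k / (p:ℤ) + 1) * p)) ∈ nhdsWithin (θ k) (Set.Ioi (θ k)) :=
        mem_nhdsWithin_of_mem_nhds (Iio_mem_nhds hlt)
      have hev : ∀ᶠ s in nhdsWithin (θ k) (Set.Ioi (θ k)), ψ s = α (k / (p:ℤ)) := by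
        filter_upwards [hmem, self_mem_nhdsWithin] with s hs1 hs2
        exact hψdef _ s ⟨lt_of_le_of_lt (hmono.monotone h1) hs2, le_of_lt hs1⟩
      exact Tendsto.congr' (hev.mono fun s hs => hs.symm) tendsto_const_nhds
    · obtain ⟨h1, h2⟩ := hdiv (k - 1)
      have h2' : k ≤ ((k-1) / (p:ℤ) + 1) * p := by
        have := Int.add_one_le_iff.mpr h2
        linarith
      have hkk : θ (k - 1) < θ k := hmono (by omega)
      have hval : ψ (θ k) = α ((k-1) / (p:ℤ)) :=
        hψdef _ (θ k) ⟨lt_of_le_of_lt (hmono.monotone h1) hkk, hmono.monotone h2'⟩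
      rw [hval]
      have hlt2 : θ ((k-1) / (p:ℤ) * p) < θ k := lt_of_le_of_lt (hmono.monotone h1) hkk
      have hmem : Set.Ioi (θ ((k-1) / (p:ℤ) * p)) ∈ nhdsWithin (θ k) (Set.Iio (θ k)) :=
        mem_nhdsWithin_of_mem_nhds (Ioi_mem_nhds hlt2)
      have hev : ∀ᶠ s in nhdsWithin (θ k) (Set.Iio (θ k)), ψ s = α ((k-1) / (p:ℤ)) := by
        filter_upwards [hmem, self_mem_nhdsWithin] with s hs1 hs2
        exact hψdef _ s ⟨hs1, le_trans (le_of_lt hs2) (hmono.monotone h2')⟩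
      exact Tendsto.congr' (hev.mono fun s hs => hs.symm) tendsto_const_nhds
  · refine ⟨hυ, by linarith, ?_, ?_, ?_, ?_, ?_⟩
    · exact (tendsto_natCast_atTop_atTop.comp hqtop).const_mul_atTop hω
    · have h1 : Tendsto (fun n => ((r n : ℕ):ℝ)) atTop atTop :=
        tendsto_natCast_atTop_atTop.comp hrtop
      have h2 : Tendsto (fun n => θ 0 + ((r n : ℕ):ℝ) * ω + ω/2) atTop atTop := by
        apply tendsto_atTop_add_const_right
        apply tendsto_atTop_add_const_left
        exact h1.atTop_mul_const hω
      refine h2.congr fun n => ?_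
      rw [hA ((r n : ℤ))]; push_cast; ring
    · intro ε hε
      refine ⟨1, one_pos, fun k s₁ hs₁ s₂ hs₂ _ => ?_⟩
      obtain ⟨j, hj⟩ := hconst k
      rw [hj s₁ hs₁, hj s₂ hs₂]
      simpa using hε
    · intro C hC
      rw [Metric.tendstoUniformlyOn_iff]
      intro ε hε
      obtain ⟨R, hR⟩ := hC.isBounded.subset_closedBall 0
      set B : ℝ := (R + |θ 0|) / ω with hBdef
      set N : ℤ := ⌈B⌉ + 1 with hNdef
      have key : ∀ k ∈ Finset.Icc (-N) N, ∀ᶠ n in atTop, ‖α (k + (q n : ℤ)) - α k‖ < ε :=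
        fun k _ => (hconv k).eventually (gt_mem_nhds hε)
      filter_upwards [(Filter.eventually_all_finset (Finset.Icc (-N) N)).mpr key]
        with n hn t ht
      obtain ⟨k, hk1, hk2⟩ := hex t
      have htR : |t| ≤ R := by
        have := hR ht
        simpa [Real.dist_eq] using this
      have hB : B * ω = R + |θ 0| := div_mul_cancel₀ _ (ne_of_gt hω)
      have hup : (k:ℝ) < B := by
        apply (mul_lt_mul_iff_of_pos_right hω).mp
        rw [hB]
        have h3 : t ≤ R := le_trans (le_abs_self t) htR
        linarith [neg_abs_le (θ 0)]
      have hlo : -B ≤ (k:ℝ) + 1 := by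
        apply (mul_le_mul_iff_of_pos_right hω).mp
        rw [neg_mul, hB]
        have h3 : -R ≤ t := neg_le_of_abs_le htR
        linarith [le_abs_self (θ 0)]
      have hkN : k ∈ Finset.Icc (-N) N := by
        simp only [Finset.mem_Icc]
        constructor
        · have : ((-N : ℤ):ℝ) ≤ (k:ℝ) := by
            rw [hNdef]; push_cast
            linarith [Int.le_ceil B]
          exact_mod_cast this
        · have : (k:ℝ) ≤ ((N:ℤ):ℝ) := by
            rw [hNdef]; push_cast
            linarith [Int.le_ceil B]
          exact_mod_cast this
      have hq1 : ψ t = α k := hψ' k t hk1 hk2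
      have hq2 : ψ (t + ω * (q n : ℝ)) = α (k + (q n : ℤ)) := by
        apply hψ' (k + (q n : ℤ))
        · push_cast; nlinarith
        · push_cast; nlinarith
      rw [dist_eq_norm, hq1, hq2, norm_sub_rev]
      exact hn k hkN
    · intro n t ht
      obtain ⟨ht1, ht2⟩ := ht
      beta_reduce at ht1 ht2
      rw [hA ((r n : ℤ))] at ht1 ht2
      have h1 : ψ t = α ((r n : ℤ)) := by
        apply hψ' ((r n : ℤ))
        · push_cast at ht1 ⊢; linarith
        · push_cast at ht2 ⊢; linarith
      have h2 : ψ (t + ω * (q n : ℝ)) = α ((r n : ℤ) + (q n : ℤ)) := by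
        apply hψ' ((r n : ℤ) + (q n : ℤ))
        · push_cast at ht1 ⊢; nlinarith
        · push_cast at ht2 ⊢; nlinarith
      simp only [h1, h2]
      rw [add_comm ((r n : ℤ)) ((q n : ℤ))]
      exact hsep n
end
end

section
/- Let p ∈ ℕ with p ≥ 1, ω > 0, and θ ∈ 𝒮(p,ω). Let {σ_k}_{k∈ℤ} be an asymptotically unpredictable sequence in ℝ^m. Define g : ℝ → ℝ^m by g(t) = σ_k for t ∈ (θ_{kp}, θ_{(k+1)p}], k ∈ ℤ. Then g belongs to ℬ𝒫𝒞(θ) and g is an asymptotically unpredictable function. -/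
open Filter Topology

noncomputable section

namespace S8

noncomputable def kof (ω θ0 t : ℝ) : ℤ := ⌈(t - θ0)/ω⌉ - 1

lemma kof_eq_iff {ω θ0 : ℝ} (hω : 0 < ω) {t : ℝ} {k : ℤ} :
    kof ω θ0 t = k ↔ θ0 + (k : ℝ) * ω < t ∧ t ≤ θ0 + ((k : ℝ) + 1) * ω := by
  unfold kof
  rw [sub_eq_iff_eq_add, Int.ceil_eq_iff, lt_div_iff₀ hω, div_le_iff₀ hω]
  push_cast
  constructor <;> rintro ⟨h1, h2⟩ <;> constructor <;> nlinarith

lemma kof_spec {ω θ0 : ℝ} (hω : 0 < ω) (t : ℝ) :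
    θ0 + (kof ω θ0 t : ℝ) * ω < t ∧ t ≤ θ0 + ((kof ω θ0 t : ℝ) + 1) * ω :=
  (kof_eq_iff hω).mp rfl

lemma kof_add_int {ω θ0 : ℝ} (hω : 0 < ω) (t : ℝ) (q : ℤ) :
    kof ω θ0 (t + (q : ℝ) * ω) = kof ω θ0 t + q := by
  unfold kof
  have h : (t + (q : ℝ) * ω - θ0)/ω = (t - θ0)/ω + (q : ℝ) := by
    field_simp; ring
  rw [h, Int.ceil_add_intCast]
  ring

lemma kof_mono {ω θ0 : ℝ} (hω : 0 < ω) {s t : ℝ} (h : s ≤ t) :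
    kof ω θ0 s ≤ kof ω θ0 t := by
  unfold kof
  have : (s - θ0)/ω ≤ (t - θ0)/ω := by gcongr
  exact sub_le_sub_right (Int.ceil_le_ceil this) 1

lemma kof_tendsto {ω : ℝ} (hω : 0 < ω) (θ0 : ℝ) : Tendsto (kof ω θ0) atTop atTop := by
  rw [tendsto_atTop]
  intro b
  filter_upwards [eventually_ge_atTop (θ0 + ((b : ℝ) + 1) * ω)] with t ht
  have h1 : ((b : ℝ) + 1) ≤ (t - θ0)/ω := by rw [le_div_iff₀ hω]; linarith
  have h2 : ((b : ℤ) + 1 : ℤ) ≤ ⌈(t - θ0)/ω⌉ := by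
    have := le_trans h1 (Int.le_ceil _)
    exact_mod_cast this
  unfold kof
  omega

lemma theta_mul {p : ℕ} {ω : ℝ} {θ : ℤ → ℝ} (h : ∀ k : ℤ, θ (k + (p:ℤ)) = θ k + ω) :
    ∀ k : ℤ, θ (k * (p:ℤ)) = θ 0 + (k : ℝ) * ω := by
  intro k
  induction k using Int.induction_on with
  | zero => simp
  | succ n ih =>
    have h2 := h ((n : ℤ) * p)
    rw [show ((n:ℤ)+1) * (p:ℤ) = (n:ℤ)*p + p by ring, h2, ih]
    push_cast; ring
  | pred n ih =>
    have h2 := h ((-(n:ℤ)-1) * p)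
    rw [show (-(n:ℤ)-1) * (p:ℤ) + p = (-(n:ℤ)) * p by ring, ih] at h2
    push_cast at h2 ⊢
    linarith

lemma kof_const {p : ℕ} {ω : ℝ} {θ : ℤ → ℝ} (hω : 0 < ω) (hmono : StrictMono θ)
    (hper : ∀ k : ℤ, θ (k + (p:ℤ)) = θ k + ω) {j : ℤ} {s t : ℝ}
    (h1 : θ (j - 1) < s) (h2 : s ≤ t) (h3 : t ≤ θ j) :
    kof ω (θ 0) s = kof ω (θ 0) t := by
  by_contra hne
  have hlt : kof ω (θ 0) s < kof ω (θ 0) t := lt_of_le_of_ne (kof_mono hω h2) hne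
  set ks := kof ω (θ 0) s with hks
  set kt := kof ω (θ 0) t with hkt
  have hs := kof_spec hω (θ0 := θ 0) s
  have ht := kof_spec hω (θ0 := θ 0) t
  have hcast : ((ks : ℝ) + 1) ≤ (kt : ℝ) := by exact_mod_cast hlt
  have hc1 : s ≤ θ 0 + (kt : ℝ) * ω := le_trans hs.2 (by nlinarith)
  have hc2 : θ 0 + (kt : ℝ) * ω < t := ht.1
  have hceq : θ (kt * (p:ℤ)) = θ 0 + (kt : ℝ) * ω := theta_mul hper kt
  have hlo : θ (j - 1) < θ (kt * (p:ℤ)) := by rw [hceq]; linarith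
  have hhi : θ (kt * (p:ℤ)) < θ j := by rw [hceq]; linarith
  have hlo' : j - 1 < kt * (p:ℤ) := hmono.lt_iff_lt.mp hlo
  have hhi' : kt * (p:ℤ) < j := hmono.lt_iff_lt.mp hhi
  omega

end S8

namespace S8
lemma step_BPC {m p : ℕ} {ω : ℝ} {θ : ℤ → ℝ} (hω : 0 < ω) (hmono : StrictMono θ)
    (hper : ∀ k : ℤ, θ (k + (p:ℤ)) = θ k + ω)
    (a : ℤ → EuclideanSpace ℝ (Fin m)) (M : ℝ) (hM : ∀ k, ‖a k‖ ≤ M) :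
    BPC m θ (fun t => a (kof ω (θ 0) t)) := by
  refine ⟨⟨M, fun t => hM _⟩, ?_, ?_, ?_⟩
  · intro k
    apply ContinuousOn.congr (continuousOn_const (c := a (kof ω (θ 0) (θ k))))
    intro t ht
    exact congrArg a (kof_const hω hmono hper ht.1 (le_of_lt ht.2) le_rfl)
  · intro k
    refine ⟨a (kof ω (θ 0) (θ (k + 1))), ?_⟩
    have hmem : Set.Ioo (θ k) (θ (k + 1)) ∈ nhdsWithin (θ k) (Set.Ioi (θ k)) :=
      Ioo_mem_nhdsGT_of_mem ⟨le_rfl, hmono (by omega)⟩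
    have hev : ∀ᶠ t in nhdsWithin (θ k) (Set.Ioi (θ k)),
        a (kof ω (θ 0) (θ (k + 1))) = a (kof ω (θ 0) t) := by
      filter_upwards [hmem] with t ht
      have : kof ω (θ 0) t = kof ω (θ 0) (θ (k + 1)) := by
        have h1 : θ (k + 1 - 1) < t := by simpa using ht.1
        exact kof_const hω hmono hper h1 (le_of_lt ht.2) le_rfl
      rw [this]
    exact tendsto_const_nhds.congr' hev
  · intro k
    have hmem : Set.Ioo (θ (k - 1)) (θ k) ∈ nhdsWithin (θ k) (Set.Iio (θ k)) :=
      Ioo_mem_nhdsLT_of_mem ⟨hmono (by omega), le_rfl⟩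
    have hev : ∀ᶠ t in nhdsWithin (θ k) (Set.Iio (θ k)),
        a (kof ω (θ 0) (θ k)) = a (kof ω (θ 0) t) := by
      filter_upwards [hmem] with t ht
      rw [kof_const hω hmono hper ht.1 (le_of_lt ht.2) le_rfl]
    exact tendsto_const_nhds.congr' hev
end S8

/-- if `{σ k}` is an asymptotically unpredictable sequence and `g(t) = σ k` for
`t ∈ (θ (kp), θ ((k+1)p)]`, then `g ∈ ℬ𝒫𝒞(θ)` and `g` is an asymptotically unpredictable
function. -/
theorem statement8 (m p : ℕ) (hp : 1 ≤ p) (ω : ℝ) (hω : 0 < ω) (θ : ℤ → ℝ)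
    (hθ : SSeq p ω θ) (σ : ℤ → EuclideanSpace ℝ (Fin m))
    (hσ : AsympUnpredictableSeq m σ)
    (g : ℝ → EuclideanSpace ℝ (Fin m))
    (hgdef : ∀ k : ℤ, ∀ t ∈ Set.Ioc (θ (k * (p : ℤ))) (θ ((k + 1) * (p : ℤ))), g t = σ k) :
    BPC m θ g ∧ AsympUnpredictable m θ g := by
  obtain ⟨hmono, _, hper⟩ := hθ
  obtain ⟨⟨Mσ, hMσ⟩, α, β, ⟨⟨Mα, hMα⟩, υ₀, q, r, hυ, hqpos, hrpos, hqT, hrT, hconv, hsep⟩,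
    hβ0, hσdef⟩ := hσ
  set θ0 := θ 0 with hθ0
  -- g t = σ (kof t)
  have hg : ∀ t, g t = σ (S8.kof ω θ0 t) := by
    intro t
    apply hgdef (S8.kof ω θ0 t)
    have hs := S8.kof_spec hω (θ0 := θ0) t
    constructor
    · rw [S8.theta_mul hper]; exact hs.1
    · rw [S8.theta_mul hper]; push_cast; exact hs.2
  have geq : g = fun t => σ (S8.kof ω θ0 t) := funext hg
  subst geq
  -- boundedness of β
  have hMβ : ∀ k, ‖β k‖ ≤ Mσ + Mα := by
    intro k
    have h1 : β k = σ k - α k := by rw [hσdef k]; abel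
    rw [h1]
    calc ‖σ k - α k‖ ≤ ‖σ k‖ + ‖α k‖ := norm_sub_le _ _
      _ ≤ Mσ + Mα := add_le_add (hMσ k) (hMα k)
  have hBPCg : BPC m θ (fun t => σ (S8.kof ω θ0 t)) :=
    S8.step_BPC hω hmono hper σ Mσ hMσ
  refine ⟨hBPCg, hBPCg, fun t => α (S8.kof ω θ0 t), fun t => β (S8.kof ω θ0 t), ?_, ?_, ?_, ?_⟩
  · -- Unpredictable ψ
    refine ⟨S8.step_BPC hω hmono hper α Mα hMα, υ₀, ω/4,
      fun n => (q n : ℝ) * ω, fun n => θ0 + (r n : ℝ) * ω + ω/2,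
      hυ, by positivity, ?_, ?_, ?_, ?_, ?_⟩
    · exact Tendsto.atTop_mul_const hω (tendsto_natCast_atTop_atTop.comp hqT)
    · apply tendsto_atTop_add_const_right
      apply tendsto_atTop_add_const_left
      exact Tendsto.atTop_mul_const hω (tendsto_natCast_atTop_atTop.comp hrT)
    · -- condition (i)
      intro ε hε
      refine ⟨1, one_pos, fun k s₁ hs₁ s₂ hs₂ _ => ?_⟩
      have : S8.kof ω θ0 s₁ = S8.kof ω θ0 s₂ := by
        rcases le_total s₁ s₂ with h | h
        · exact S8.kof_const hω hmono hper hs₁.1 h (le_of_lt hs₂.2)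
        · exact (S8.kof_const hω hmono hper hs₂.1 h (le_of_lt hs₁.2)).symm
      simp only [this, sub_self, norm_zero]
      exact hε
    · -- condition (ii)
      intro C hC
      obtain ⟨R, hR⟩ := hC.isBounded.subset_closedBall 0
      rw [Metric.tendstoUniformlyOn_iff]
      intro ε hε
      have hfin : ∀ᶠ n in atTop, ∀ k ∈ Finset.Icc (S8.kof ω θ0 (-R)) (S8.kof ω θ0 R),
          ‖α (k + (q n : ℤ)) - α k‖ < ε := by
        rw [Filter.eventually_all_finset]
        intro k _
        exact Tendsto.eventually_lt_const hε (hconv k)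
      filter_upwards [hfin] with n hn t htC
      have htR : t ∈ Set.Icc (-R) R := by
        have := hR htC
        rwa [Real.closedBall_eq_Icc, zero_sub, zero_add] at this
      have hk : S8.kof ω θ0 t ∈ Finset.Icc (S8.kof ω θ0 (-R)) (S8.kof ω θ0 R) :=
        Finset.mem_Icc.2 ⟨S8.kof_mono hω htR.1, S8.kof_mono hω htR.2⟩
      have hadd : S8.kof ω θ0 (t + (q n : ℝ) * ω) = S8.kof ω θ0 t + (q n : ℤ) := by
        have := S8.kof_add_int hω (θ0 := θ0) t (q n : ℤ)
        push_cast at this ⊢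
        exact this
      simp only [dist_eq_norm, hadd]
      rw [norm_sub_rev]
      exact hn _ hk
    · -- condition (iii)
      intro n t ht
      have hkt : S8.kof ω θ0 t = (r n : ℤ) := by
        rw [S8.kof_eq_iff hω]
        obtain ⟨h1, h2⟩ := ht
        constructor
        · push_cast; nlinarith [h1]
        · push_cast; nlinarith [h2]
      have hadd : S8.kof ω θ0 (t + (q n : ℝ) * ω) = S8.kof ω θ0 t + (q n : ℤ) := by
        have := S8.kof_add_int hω (θ0 := θ0) t (q n : ℤ)
        push_cast at this ⊢
        exact this
      simp only [hadd, hkt]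
      rw [add_comm ((r n : ℤ)) ((q n : ℤ))]
      exact hsep n
  · exact S8.step_BPC hω hmono hper β (Mσ + Mα) hMβ
  · exact hβ0.comp (S8.kof_tendsto hω θ0)
  · intro t
    exact hσdef _
end
end

section
/- Let p ∈ ℕ with p ≥ 1, ω > 0, θ ∈ 𝒮(p,ω), and λ > 0. Then for all real numbers t₀ and t with t ≥ t₀, the family (e^{−λ(t−θ_k)}) indexed by the indices k ∈ ℤ with θ_k ≤ t₀ is summable, and its sum satisfies ∑_{k : θ_k ≤ t₀} e^{−λ(t−θ_k)} ≤ (p/(1 − e^{−λω})) e^{−λ(t−t₀)}. -/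
/-!
Write `q = e^{-λω}`. Label each index `k` with `θ k ≤ t₀` by its residue class modulo `p` and
by the number `m = ⌊(t₀ - θ k)/ω⌋` of whole periods separating `θ k` from `t₀`. Since
`θ (k + p j) = θ k + j ω`, this labelling is injective, and the term of `k` is at most
`e^{-λ(t - t₀)} q^m`. Hence the sum is dominated by
`e^{-λ(t - t₀)} ∑_{(r, m) ∈ ℤ/p × ℕ} q^m = p e^{-λ(t - t₀)} / (1 - q)`.
-/

open Filter Topology

noncomputable section

theorem hasSum_pow_snd_of_lt_one {ι : Type*} [Fintype ι] {r : ℝ} (h₀ : 0 ≤ r) (h₁ : r < 1) :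
    HasSum (fun x : ι × ℕ => r ^ x.2) (Fintype.card ι * (1 - r)⁻¹) := by
  have hsum : Summable fun x : ι × ℕ => (1 : ℝ) * r ^ x.2 :=
    (summable_prod_of_nonneg fun x => by positivity).mpr
      ⟨fun _ => (summable_geometric_of_lt_one h₀ h₁).mul_left 1, Summable.of_finite⟩
  simpa using (hasSum_fintype fun _ : ι => (1 : ℝ)).mul (hasSum_geometric_of_lt_one h₀ h₁) hsum

section QuasiPeriodic

variable {p : ℕ} {ω : ℝ} {θ : ℤ → ℝ}

theorem ne_zero_of_quasiPeriodic (hper : ∀ k : ℤ, θ (k + p) = θ k + ω) (hω : ω ≠ 0) : p ≠ 0 := by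
  rintro rfl
  simpa [hω] using hper 0

theorem quasiPeriodic_add_mul (hper : ∀ k : ℤ, θ (k + p) = θ k + ω) (k j : ℤ) :
    θ (k + p * j) = θ k + j * ω := by
  induction j using Int.induction_on with
  | zero => simp
  | succ j ih =>
    rw [mul_add, mul_one, ← add_assoc, hper, ih]
    push_cast
    ring
  | pred j ih =>
    have h := hper (k + p * (-j - 1))
    rw [add_assoc, ← mul_add_one, sub_add_cancel, ih] at h
    push_cast at h ⊢
    linarith

def periodLabel (p : ℕ) (ω t₀ : ℝ) (θ : ℤ → ℝ) (k : ℤ) : ZMod p × ℕ :=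
  ((k : ZMod p), ⌊(t₀ - θ k) / ω⌋.toNat)

theorem periodLabel_snd_cast (hω : 0 < ω) {t₀ : ℝ} {k : ℤ} (hk : θ k ≤ t₀) :
    ((periodLabel p ω t₀ θ k).2 : ℤ) = ⌊(t₀ - θ k) / ω⌋ :=
  Int.toNat_of_nonneg (Int.floor_nonneg.mpr (div_nonneg (sub_nonneg.mpr hk) hω.le))

theorem periodLabel_injOn (hper : ∀ k : ℤ, θ (k + p) = θ k + ω) (hω : 0 < ω) (t₀ : ℝ) :
    Set.InjOn (periodLabel p ω t₀ θ) {k | θ k ≤ t₀} := by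
  intro k hk k' hk' hkk'
  have hfloor := congrArg (fun x => (x.2 : ℤ)) hkk'
  simp only [periodLabel_snd_cast hω hk, periodLabel_snd_cast hω hk'] at hfloor
  obtain ⟨j, hj⟩ : (p : ℤ) ∣ k' - k :=
    (ZMod.intCast_eq_intCast_iff_dvd_sub k k' p).mp (congrArg Prod.fst hkk')
  obtain rfl : k' = k + p * j := by linarith
  have hshift : (t₀ - θ (k + p * j)) / ω = (t₀ - θ k) / ω - j := by
    rw [quasiPeriodic_add_mul hper]
    field_simp
    ring
  rw [hshift, Int.floor_sub_intCast] at hfloor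
  obtain rfl : j = 0 := by omega
  simp

theorem exp_le_pow_periodLabel {lam : ℝ} (hlam : 0 ≤ lam) (hω : 0 < ω) {t₀ : ℝ} {k : ℤ}
    (hk : θ k ≤ t₀) :
    Real.exp (-lam * (t₀ - θ k)) ≤ Real.exp (-lam * ω) ^ (periodLabel p ω t₀ θ k).2 := by
  set m := (periodLabel p ω t₀ θ k).2
  have hm : (m : ℝ) ≤ (t₀ - θ k) / ω := by
    have := Int.floor_le ((t₀ - θ k) / ω)
    rwa [← periodLabel_snd_cast hω hk, Int.cast_natCast] at this
  rw [le_div_iff₀ hω] at hm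
  rw [← Real.exp_nat_mul, Real.exp_le_exp]
  nlinarith

theorem summable_and_tsum_le_of_quasiPeriodic (hper : ∀ k : ℤ, θ (k + p) = θ k + ω) (hω : 0 < ω)
    {lam : ℝ} (hlam : 0 < lam) (t₀ : ℝ) :
    Summable (fun k : {k : ℤ // θ k ≤ t₀} => Real.exp (-lam * (t₀ - θ k))) ∧
      ∑' k : {k : ℤ // θ k ≤ t₀}, Real.exp (-lam * (t₀ - θ k)) ≤
        p / (1 - Real.exp (-lam * ω)) := by
  have : NeZero p := ⟨ne_zero_of_quasiPeriodic hper hω.ne'⟩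
  set q := Real.exp (-lam * ω)
  have hq₁ : q < 1 := Real.exp_lt_one_iff.mpr (by nlinarith)
  have hgeom := hasSum_pow_snd_of_lt_one (ι := ZMod p) (Real.exp_nonneg _) hq₁
  rw [ZMod.card] at hgeom
  set label : {k : ℤ // θ k ≤ t₀} → ZMod p × ℕ := fun k => periodLabel p ω t₀ θ k
  have hlabel : Function.Injective label := fun k k' h =>
    Subtype.ext (periodLabel_injOn hper hω t₀ k.2 k'.2 h)
  have hbound : ∀ k : {k : ℤ // θ k ≤ t₀}, Real.exp (-lam * (t₀ - θ k)) ≤ q ^ (label k).2 :=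
    fun k => exp_le_pow_periodLabel hlam.le hω k.2
  have hsum := Summable.of_nonneg_of_le (fun _ => (Real.exp_pos _).le) hbound
    (hgeom.summable.comp_injective hlabel)
  refine ⟨hsum, ?_⟩
  calc ∑' k : {k : ℤ // θ k ≤ t₀}, Real.exp (-lam * (t₀ - θ k))
      ≤ ∑' x : ZMod p × ℕ, q ^ x.2 :=
        hsum.tsum_le_tsum_of_inj label hlabel (fun _ _ => by positivity) hbound hgeom.summable
    _ = p / (1 - q) := by rw [hgeom.tsum_eq, div_eq_mul_inv]

end QuasiPeriodic

theorem statement10_general (p : ℕ) (ω : ℝ) (hω : 0 < ω) (θ : ℤ → ℝ)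
    (hθ : SSeq p ω θ) (lam : ℝ) (hlam : 0 < lam) (t₀ t : ℝ) :
    Summable (fun k : {k : ℤ // θ k ≤ t₀} => Real.exp (-lam * (t - θ k.1))) ∧
    ∑' k : {k : ℤ // θ k ≤ t₀}, Real.exp (-lam * (t - θ k.1)) ≤
      (p : ℝ) / (1 - Real.exp (-lam * ω)) * Real.exp (-lam * (t - t₀)) := by
  obtain ⟨hsum, hle⟩ := summable_and_tsum_le_of_quasiPeriodic hθ.2.2 hω hlam t₀
  have hsplit : ∀ k : {k : ℤ // θ k ≤ t₀},
      Real.exp (-lam * (t - θ k)) = Real.exp (-lam * (t - t₀)) * Real.exp (-lam * (t₀ - θ k)) :=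
    fun k => by rw [← Real.exp_add]; ring_nf
  simp only [hsplit]
  refine ⟨hsum.mul_left _, ?_⟩
  rw [tsum_mul_left, mul_comm _ (Real.exp _)]
  exact mul_le_mul_of_nonneg_left hle (Real.exp_pos _).le

/-- for `θ ∈ 𝒮(p,ω)`, `lam > 0` and `t₀ ≤ t`, the family
`e^{-lam (t - θ k)}` over indices `k` with `θ k ≤ t₀` is summable and its sum is at most
`(p / (1 - e^{-lam ω})) e^{-lam (t - t₀)}`. -/
theorem statement10 (p : ℕ) (hp : 1 ≤ p) (ω : ℝ) (hω : 0 < ω) (θ : ℤ → ℝ)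
    (hθ : SSeq p ω θ) (lam : ℝ) (hlam : 0 < lam) (t₀ t : ℝ) (h : t₀ ≤ t) :
    Summable (fun k : {k : ℤ // θ k ≤ t₀} => Real.exp (-lam * (t - θ k.1))) ∧
    ∑' k : {k : ℤ // θ k ≤ t₀}, Real.exp (-lam * (t - θ k.1)) ≤
      (p : ℝ) / (1 - Real.exp (-lam * ω)) * Real.exp (-lam * (t - t₀)) :=
  statement10_general p ω hω θ hθ lam hlam t₀ t
end
end

section
/- Let p ∈ ℕ with p ≥ 1, ω > 0, θ ∈ 𝒮(p,ω), and λ > 0. Then for all real numbers t₀ < t, the (finite) sum over the indices k ∈ ℤ with t₀ < θ_k < t satisfies ∑_{k : t₀ < θ_k < t} e^{−λ(t−θ_k)} ≤ (p/(1 − e^{−λω})) (1 − e^{−λ(t−t₀+ω)}). -/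
/-!
Group the indices `k` with `θ k ∈ (t₀, t)` by `n = ⌊(t - θ k) / ω⌋`. Each group lies in a
half-open window of length `ω`, so by monotonicity and `θ (k + p) = θ k + ω` it has at most `p`
members, each contributing at most `r ^ n` with `r = e^{-λω}`. Since `n < N := ⌊(t - t₀) / ω⌋ + 1`,
the sum is at most `p (1 - r ^ N) / (1 - r)`, and `r ^ N ≥ e^{-λ(t - t₀ + ω)}`.
-/

open Filter Topology

noncomputable section

open Finset

theorem Set.Finite.tsum_subtype_eq_sum {α β : Type*} [AddCommMonoid α] [TopologicalSpace α]
    {s : Set β} (hs : s.Finite) (f : β → α) :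
    ∑' x : s, f x = ∑ x ∈ hs.toFinset, f x := by
  rw [← Finset.tsum_subtype', hs.coe_toFinset]

theorem finite_setOf_mem_Ioo_of_tendsto_abs {ι : Type*} {f : ι → ℝ}
    (hf : Tendsto (fun i => |f i|) cofinite atTop) (a b : ℝ) :
    {i | f i ∈ Set.Ioo a b}.Finite :=
  (eventually_cofinite.mp (hf.eventually_gt_atTop (max |a| |b|))).subset fun _ hi =>
    not_lt.mpr (abs_le_max_abs_abs hi.1.le hi.2.le)

theorem card_le_of_forall_lt_add {α : Type*} [Preorder α] [Add α] {p : ℕ} {ω : α}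
    {θ : ℤ → α} (hθ : Monotone θ) (hper : ∀ k, θ (k + p) = θ k + ω) {s : Finset ℤ}
    (hs : ∀ i ∈ s, ∀ j ∈ s, θ j < θ i + ω) : #s ≤ p := by
  rcases s.eq_empty_or_nonempty with rfl | hne
  · simp
  have hsub : s ⊆ Ico (s.min' hne) (s.min' hne + p) := fun k hk =>
    mem_Ico.mpr ⟨s.min'_le k hk, not_le.mp fun hk' =>
      not_lt_of_ge ((hper _).symm.le.trans (hθ hk')) (hs _ (s.min'_mem hne) k hk)⟩
  simpa using card_le_card hsub

theorem Finset.sum_le_mul_sum_of_card_fiber_le {ι R : Type*} [CommSemiring R] [PartialOrder R]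
    [IsOrderedRing R] {s : Finset ι} {f : ι → ℕ} {N p : ℕ} {g : ι → R} {c : ℕ → R}
    (hf : ∀ i ∈ s, f i < N) (hfiber : ∀ n, #{i ∈ s | f i = n} ≤ p)
    (hg : ∀ i ∈ s, g i ≤ c (f i)) (hc : ∀ n, 0 ≤ c n) :
    ∑ i ∈ s, g i ≤ p * ∑ n ∈ range N, c n :=
  calc ∑ i ∈ s, g i ≤ ∑ i ∈ s, c (f i) := sum_le_sum hg
    _ = ∑ n ∈ range N, #{i ∈ s | f i = n} * c n := by
      rw [← sum_fiberwise_of_maps_to (fun i hi => mem_range.mpr (hf i hi))]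
      refine sum_congr rfl fun n _ => ?_
      rw [sum_congr rfl fun i hi => congrArg c (mem_filter.mp hi).2, sum_const, nsmul_eq_mul]
    _ ≤ ∑ n ∈ range N, p * c n := sum_le_sum fun n _ =>
      mul_le_mul_of_nonneg_right (Nat.mono_cast (hfiber n)) (hc n)
    _ = p * ∑ n ∈ range N, c n := (mul_sum ..).symm

theorem Real.exp_neg_mul_le_pow_floor {lam ω x : ℝ} (hlam : 0 ≤ lam) (hω : 0 < ω) (hx : 0 ≤ x) :
    Real.exp (-lam * x) ≤ Real.exp (-lam * ω) ^ ⌊x / ω⌋₊ := by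
  have hfloor : (⌊x / ω⌋₊ : ℝ) * ω ≤ x := (le_div_iff₀ hω).mp (Nat.floor_le (div_nonneg hx hω.le))
  rw [← Real.exp_nat_mul, Real.exp_le_exp]
  nlinarith

theorem lt_add_of_floor_div_eq {ω x y : ℝ} (hω : 0 < ω) (hy : 0 ≤ y)
    (h : ⌊x / ω⌋₊ = ⌊y / ω⌋₊) : x < y + ω := by
  have hx : x / ω < ⌊y / ω⌋₊ + 1 := h ▸ Nat.lt_floor_add_one _
  have hfloor : (⌊y / ω⌋₊ : ℝ) ≤ y / ω := Nat.floor_le (div_nonneg hy hω.le)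
  have hdiv : x / ω < (y + ω) / ω := by rw [add_div, div_self hω.ne']; linarith
  exact (div_lt_div_iff_of_pos_right hω).mp hdiv

theorem statement11_general (p : ℕ) (ω : ℝ) (hω : 0 < ω) (θ : ℤ → ℝ)
    (hθ : SSeq p ω θ) (lam : ℝ) (hlam : 0 < lam) (t₀ t : ℝ) (h : t₀ < t) :
    {k : ℤ | θ k ∈ Set.Ioo t₀ t}.Finite ∧
    ∑' k : {k : ℤ // θ k ∈ Set.Ioo t₀ t}, Real.exp (-lam * (t - θ k.1)) ≤
      (p : ℝ) / (1 - Real.exp (-lam * ω)) * (1 - Real.exp (-lam * (t - t₀ + ω))) := by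
  obtain ⟨hmono, htend, hper⟩ := hθ
  have hfin : {k : ℤ | θ k ∈ Set.Ioo t₀ t}.Finite :=
    finite_setOf_mem_Ioo_of_tendsto_abs (cocompact_eq_cofinite ℤ ▸ htend) t₀ t
  refine ⟨hfin, ?_⟩
  set r := Real.exp (-lam * ω)
  have hr : r < 1 := Real.exp_lt_one_iff.mpr (by nlinarith)
  set N := ⌊(t - t₀) / ω⌋₊ + 1
  have hrN : Real.exp (-lam * (t - t₀ + ω)) ≤ r ^ N := by
    rw [pow_succ, mul_add, Real.exp_add]
    gcongr
    exact Real.exp_neg_mul_le_pow_floor hlam.le hω (sub_nonneg.mpr h.le)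
  have hsum : ∑ k ∈ hfin.toFinset, Real.exp (-lam * (t - θ k)) ≤ p * ∑ n ∈ range N, r ^ n := by
    have hmem : ∀ k ∈ hfin.toFinset, t₀ < θ k ∧ θ k < t := fun k hk => hfin.mem_toFinset.mp hk
    refine sum_le_mul_sum_of_card_fiber_le (f := fun k => ⌊(t - θ k) / ω⌋₊) (fun k hk => ?_)
      (fun n => card_le_of_forall_lt_add hmono.monotone hper fun i hi j hj => ?_)
      (fun k hk => Real.exp_neg_mul_le_pow_floor hlam.le hω (sub_nonneg.mpr (hmem k hk).2.le))
      fun n => by positivity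
    · exact Nat.lt_succ_of_le (Nat.floor_le_floor (by gcongr; exact (hmem k hk).1.le))
    · simp only [mem_filter] at hi hj
      have hclose := lt_add_of_floor_div_eq hω (sub_nonneg.mpr (hmem j hj.1).2.le) (hi.2.trans hj.2.symm)
      linarith
  calc _ = ∑ k ∈ hfin.toFinset, Real.exp (-lam * (t - θ k)) :=
        hfin.tsum_subtype_eq_sum fun k => Real.exp (-lam * (t - θ k))
    _ ≤ p * ∑ n ∈ range N, r ^ n := hsum
    _ = p / (1 - r) * (1 - r ^ N) := by
      rw [← mul_neg_geom_sum r N]; field_simp [(sub_pos.mpr hr).ne']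
    _ ≤ _ := by gcongr

/-- for `θ ∈ 𝒮(p,ω)`, `lam > 0` and `t₀ < t`, the set of indices `k` with
`θ k ∈ (t₀, t)` is finite and the (finite) sum of `e^{-lam (t - θ k)}` over it is at most
`(p / (1 - e^{-lam ω})) (1 - e^{-lam (t - t₀ + ω)})`. -/
theorem statement11 (p : ℕ) (hp : 1 ≤ p) (ω : ℝ) (hω : 0 < ω) (θ : ℤ → ℝ)
    (hθ : SSeq p ω θ) (lam : ℝ) (hlam : 0 < lam) (t₀ t : ℝ) (h : t₀ < t) :
    {k : ℤ | θ k ∈ Set.Ioo t₀ t}.Finite ∧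
    ∑' k : {k : ℤ // θ k ∈ Set.Ioo t₀ t}, Real.exp (-lam * (t - θ k.1)) ≤
      (p : ℝ) / (1 - Real.exp (-lam * ω)) * (1 - Real.exp (-lam * (t - t₀ + ω))) :=
  statement11_general p ω hω θ hθ lam hlam t₀ t h
end
end

section
/- Let p ∈ ℕ with p ≥ 1, ω > 0, and θ ∈ 𝒮(p,ω). Let a > 0 and b > 0 be real numbers and let t₀ < t be real numbers. Then the identity 1 + ∫_{t₀}^{t} a (1+b)^{i((s,t))} e^{a(t−s)} ds + ∑_{k : t₀ < θ_k < t} b (1+b)^{i((θ_k,t))} e^{a(t−θ_k)} = (1+b)^{i((t₀,t))} e^{a(t−t₀)} holds, where the sum is over the finitely many indices k ∈ ℤ with t₀ < θ_k < t. -/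
open Filter Topology MeasureTheory

noncomputable section

/-- `i(J)`: the number of indices `k` with `θ k ∈ (s, t)` (open interval). -/
def iIoo (θ : ℤ → ℝ) (s t : ℝ) : ℕ := {k : ℤ | θ k ∈ Set.Ioo s t}.ncard

private lemma tsum_set_finite {S : Set ℤ} (hS : S.Finite) (f : ℤ → ℝ) :
    ∑' k : S, f k = ∑ k ∈ hS.toFinset, f k := by
  rw [tsum_subtype,
    tsum_eq_sum (s := hS.toFinset) (fun k hk => Set.indicator_of_notMem (by simpa using hk) f)]
  exact Finset.sum_congr rfl fun k hk => Set.indicator_of_mem (by simpa using hk) f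

private lemma tsum_theta (θ : ℤ → ℝ) {u v : ℝ}
    (hS : {k : ℤ | θ k ∈ Set.Ioo u v}.Finite) (f : ℤ → ℝ) :
    ∑' k : {k : ℤ // θ k ∈ Set.Ioo u v}, f k.1 = ∑ k ∈ hS.toFinset, f k :=
  tsum_set_finite hS f

private lemma int_exp (a t u v : ℝ) :
    ∫ s in u..v, a * Real.exp (a * (t - s)) =
      Real.exp (a * (t - u)) - Real.exp (a * (t - v)) := by
  have h : ∀ x : ℝ, HasDerivAt (fun s => -Real.exp (a * (t - s)))
      (a * Real.exp (a * (t - x))) x := by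
    intro x
    have h1 : HasDerivAt (fun s : ℝ => a * (t - s)) (-a) x := by
      simpa using ((hasDerivAt_id x).const_sub t).const_mul a
    have h2 := (Real.hasDerivAt_exp (a * (t - x))).comp x h1
    have h3 := h2.neg
    have h4 : (fun s => -Real.exp (a * (t - s))) = -Real.exp ∘ fun s => a * (t - s) := rfl
    rw [h4]
    exact h3.congr_deriv (by ring)
  rw [intervalIntegral.integral_eq_sub_of_hasDerivAt (fun x _ => h x)
    (Continuous.intervalIntegrable (by continuity) u v)]
  ring

private lemma aux_key (θ : ℤ → ℝ) (hmono : StrictMono θ)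
    (hfin : ∀ s u : ℝ, {k : ℤ | θ k ∈ Set.Ioo s u}.Finite)
    (a b t : ℝ) (ha : 0 < a) (hb : 0 < b) :
    ∀ n : ℕ, ∀ t₀ : ℝ, t₀ < t → iIoo θ t₀ t = n →
    1 + (∫ s in t₀..t, a * (1 + b) ^ (iIoo θ s t) * Real.exp (a * (t - s))) +
      ∑' k : {k : ℤ // θ k ∈ Set.Ioo t₀ t},
        b * (1 + b) ^ (iIoo θ (θ k.1) t) * Real.exp (a * (t - θ k.1)) =
    (1 + b) ^ (iIoo θ t₀ t) * Real.exp (a * (t - t₀)) := by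
  have hb1 : (1:ℝ) ≤ 1 + b := by linarith
  have hanti : Antitone (fun s => a * (1 + b) ^ (iIoo θ s t) * Real.exp (a * (t - s))) := by
    intro s₁ s₂ hs
    have hsub : {k : ℤ | θ k ∈ Set.Ioo s₂ t} ⊆ {k : ℤ | θ k ∈ Set.Ioo s₁ t} :=
      fun k hk => ⟨lt_of_le_of_lt hs hk.1, hk.2⟩
    have h1 : iIoo θ s₂ t ≤ iIoo θ s₁ t := Set.ncard_le_ncard hsub (hfin s₁ t)
    have h2 : (1+b) ^ iIoo θ s₂ t ≤ (1+b) ^ iIoo θ s₁ t := pow_le_pow_right₀ hb1 h1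
    have h3 : Real.exp (a * (t - s₂)) ≤ Real.exp (a * (t - s₁)) := by
      apply Real.exp_le_exp.mpr; nlinarith
    exact mul_le_mul (mul_le_mul le_rfl h2 (by positivity) ha.le) h3
      (Real.exp_pos _).le (by positivity)
  intro n
  induction n with
  | zero =>
    intro t₀ ht h0
    have hempty : {k : ℤ | θ k ∈ Set.Ioo t₀ t} = ∅ := by
      rw [← Set.ncard_eq_zero (hfin t₀ t)]; exact h0
    have hiz : ∀ s, t₀ ≤ s → iIoo θ s t = 0 := by
      intro s hs
      have hsub : {k : ℤ | θ k ∈ Set.Ioo s t} = ∅ := by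
        rw [Set.eq_empty_iff_forall_notMem]
        intro k hk
        exact Set.eq_empty_iff_forall_notMem.mp hempty k ⟨lt_of_le_of_lt hs hk.1, hk.2⟩
      show {k : ℤ | θ k ∈ Set.Ioo s t}.ncard = 0
      rw [hsub, Set.ncard_empty]
    have hint : (∫ s in t₀..t, a * (1+b)^(iIoo θ s t) * Real.exp (a*(t-s)))
        = ∫ s in t₀..t, a * Real.exp (a*(t-s)) := by
      apply intervalIntegral.integral_congr
      intro s hs
      rw [Set.uIcc_of_le ht.le] at hs
      simp [hiz s hs.1]
    have hie : IsEmpty {k : ℤ // θ k ∈ Set.Ioo t₀ t} := by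
      constructor
      rintro ⟨k, hk⟩
      exact Set.eq_empty_iff_forall_notMem.mp hempty k hk
    haveI := hie
    rw [hint, int_exp, h0, tsum_empty]
    rw [sub_self, mul_zero, Real.exp_zero, pow_zero]
    ring
  | succ n IH =>
    intro t₀ ht hcard
    have hSfin := hfin t₀ t
    have hSne : hSfin.toFinset.Nonempty := by
      rw [Set.Finite.toFinset_nonempty]
      exact Set.nonempty_of_ncard_ne_zero (by rw [show {k : ℤ | θ k ∈ Set.Ioo t₀ t}.ncard = iIoo θ t₀ t from rfl, hcard]; omega)
    set m := hSfin.toFinset.min' hSne with hm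
    have hmS : θ m ∈ Set.Ioo t₀ t := by
      have : m ∈ hSfin.toFinset := hSfin.toFinset.min'_mem hSne
      simpa using this
    have hmin : ∀ k, θ k ∈ Set.Ioo t₀ t → m ≤ k := fun k hk =>
      Finset.min'_le _ k (by simpa using hk)
    have hA : {k : ℤ | θ k ∈ Set.Ioo (θ m) t} = {k : ℤ | θ k ∈ Set.Ioo t₀ t} \ {m} := by
      ext k
      constructor
      · intro hk
        refine ⟨⟨lt_trans hmS.1 hk.1, hk.2⟩, ?_⟩
        intro hkm
        rw [Set.mem_singleton_iff] at hkm
        subst hkm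
        exact lt_irrefl _ hk.1
      · rintro ⟨hk, hkm⟩
        have hmk : m < k := lt_of_le_of_ne (hmin k hk) (Ne.symm hkm)
        exact ⟨hmono hmk, hk.2⟩
    have hiA : iIoo θ (θ m) t = n := by
      show {k : ℤ | θ k ∈ Set.Ioo (θ m) t}.ncard = n
      rw [hA, Set.ncard_diff_singleton_of_mem (show m ∈ {k : ℤ | θ k ∈ Set.Ioo t₀ t} from hmS),
        show {k : ℤ | θ k ∈ Set.Ioo t₀ t}.ncard = iIoo θ t₀ t from rfl, hcard]
      omega
    have hconst : ∀ s, t₀ ≤ s → s < θ m → iIoo θ s t = n + 1 := by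
      intro s hs1 hs2
      have hSeq : {k : ℤ | θ k ∈ Set.Ioo s t} = {k : ℤ | θ k ∈ Set.Ioo t₀ t} := by
        ext k
        constructor
        · intro hk; exact ⟨lt_of_le_of_lt hs1 hk.1, hk.2⟩
        · intro hk; exact ⟨lt_of_lt_of_le hs2 (hmono.monotone (hmin k hk)), hk.2⟩
      show {k : ℤ | θ k ∈ Set.Ioo s t}.ncard = n + 1
      rw [hSeq]; exact hcard
    have hint1 : IntervalIntegrable
        (fun s => a * (1 + b) ^ (iIoo θ s t) * Real.exp (a * (t - s))) volume t₀ (θ m) :=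
      hanti.intervalIntegrable
    have hint2 : IntervalIntegrable
        (fun s => a * (1 + b) ^ (iIoo θ s t) * Real.exp (a * (t - s))) volume (θ m) t :=
      hanti.intervalIntegrable
    have hsplit : (∫ s in t₀..t, a * (1+b)^(iIoo θ s t) * Real.exp (a*(t-s)))
        = (∫ s in t₀..(θ m), a * (1+b)^(iIoo θ s t) * Real.exp (a*(t-s)))
          + ∫ s in (θ m)..t, a * (1+b)^(iIoo θ s t) * Real.exp (a*(t-s)) :=
      (intervalIntegral.integral_add_adjacent_intervals hint1 hint2).symm
    have hfirst : (∫ s in t₀..(θ m), a * (1+b)^(iIoo θ s t) * Real.exp (a*(t-s)))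
        = (1+b)^(n+1) * (Real.exp (a*(t-t₀)) - Real.exp (a*(t - θ m))) := by
      have hcongr : (∫ s in t₀..(θ m), a * (1+b)^(iIoo θ s t) * Real.exp (a*(t-s)))
          = ∫ s in t₀..(θ m), (1+b)^(n+1) * (a * Real.exp (a*(t-s))) := by
        apply intervalIntegral.integral_congr_ae
        have hnull : ∀ᵐ s : ℝ, s ≠ θ m := by
          have h0 : (volume : MeasureTheory.Measure ℝ) {θ m} = 0 :=
            MeasureTheory.measure_singleton _
          rw [MeasureTheory.ae_iff]
          simpa [Set.setOf_eq_eq_singleton] using h0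
        filter_upwards [hnull] with s hsne hsmem
        rw [Set.uIoc_of_le hmS.1.le] at hsmem
        rw [hconst s hsmem.1.le (lt_of_le_of_ne hsmem.2 hsne)]
        ring
      rw [hcongr, intervalIntegral.integral_const_mul, int_exp]
    -- sum split
    have hAfin : {k : ℤ | θ k ∈ Set.Ioo (θ m) t}.Finite := hfin (θ m) t
    have htf : hAfin.toFinset = hSfin.toFinset.erase m := by
      ext k
      simp only [Set.Finite.mem_toFinset, Finset.mem_erase, Set.Finite.mem_toFinset]
      rw [show {k : ℤ | θ k ∈ Set.Ioo (θ m) t} = _ from hA]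
      simp [Set.mem_diff, and_comm]
    have hsum : (∑' k : {k : ℤ // θ k ∈ Set.Ioo t₀ t},
          b * (1 + b) ^ (iIoo θ (θ k.1) t) * Real.exp (a * (t - θ k.1)))
        = b * (1 + b) ^ (iIoo θ (θ m) t) * Real.exp (a * (t - θ m))
          + ∑' k : {k : ℤ // θ k ∈ Set.Ioo (θ m) t},
              b * (1 + b) ^ (iIoo θ (θ k.1) t) * Real.exp (a * (t - θ k.1)) := by
      have e1 : (∑' k : {k : ℤ // θ k ∈ Set.Ioo t₀ t},
            b * (1 + b) ^ (iIoo θ (θ k.1) t) * Real.exp (a * (t - θ k.1)))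
          = ∑ k ∈ hSfin.toFinset,
              b * (1 + b) ^ (iIoo θ (θ k) t) * Real.exp (a * (t - θ k)) :=
        tsum_theta θ hSfin (fun k => b * (1 + b) ^ (iIoo θ (θ k) t) * Real.exp (a * (t - θ k)))
      have e2 : (∑' k : {k : ℤ // θ k ∈ Set.Ioo (θ m) t},
            b * (1 + b) ^ (iIoo θ (θ k.1) t) * Real.exp (a * (t - θ k.1)))
          = ∑ k ∈ hAfin.toFinset,
              b * (1 + b) ^ (iIoo θ (θ k) t) * Real.exp (a * (t - θ k)) :=
        tsum_theta θ hAfin (fun k => b * (1 + b) ^ (iIoo θ (θ k) t) * Real.exp (a * (t - θ k)))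
      rw [e1, e2, htf,
        Finset.add_sum_erase _ (fun k => b * (1 + b) ^ (iIoo θ (θ k) t) * Real.exp (a * (t - θ k)))
          (by simpa using hmS)]
    have ih := IH (θ m) hmS.2 hiA
    rw [hiA] at ih
    rw [hsplit, hfirst, hsum, hiA, show iIoo θ t₀ t = n + 1 from hcard]
    linear_combination ih

/-- for `θ ∈ 𝒮(p,ω)`, `a, b > 0` and `t₀ < t`, the identity
`1 + ∫_{t₀}^{t} a (1+b)^{i((s,t))} e^{a(t-s)} ds
  + ∑_{t₀ < θ k < t} b (1+b)^{i((θ k,t))} e^{a(t-θ k)} = (1+b)^{i((t₀,t))} e^{a(t-t₀)}`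
holds, the set of indices with `t₀ < θ k < t` being finite. -/
theorem statement12 (p : ℕ) (hp : 1 ≤ p) (ω : ℝ) (hω : 0 < ω) (θ : ℤ → ℝ)
    (hθ : SSeq p ω θ) (a b : ℝ) (ha : 0 < a) (hb : 0 < b) (t₀ t : ℝ) (h : t₀ < t) :
    {k : ℤ | θ k ∈ Set.Ioo t₀ t}.Finite ∧
    1 + (∫ s in t₀..t, a * (1 + b) ^ (iIoo θ s t) * Real.exp (a * (t - s))) +
      ∑' k : {k : ℤ // θ k ∈ Set.Ioo t₀ t},
        b * (1 + b) ^ (iIoo θ (θ k.1) t) * Real.exp (a * (t - θ k.1)) =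
    (1 + b) ^ (iIoo θ t₀ t) * Real.exp (a * (t - t₀)) := by
  have hfin : ∀ s u : ℝ, {k : ℤ | θ k ∈ Set.Ioo s u}.Finite := by
    intro s u
    have h1 : ∀ᶠ k in cocompact ℤ, max |s| |u| + 1 ≤ |θ k| :=
      hθ.2.1.eventually (eventually_ge_atTop _)
    rw [cocompact_eq_cofinite, eventually_cofinite] at h1
    apply h1.subset
    intro k hk
    simp only [Set.mem_setOf_eq, not_le]
    have h2 : |θ k| ≤ max |s| |u| := by
      rw [abs_le]
      constructor
      · have := hk.1
        have := neg_abs_le s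
        have := le_max_left |s| |u|
        linarith
      · have := hk.2
        have := le_abs_self u
        have := le_max_right |s| |u|
        linarith
    linarith
  exact ⟨hfin t₀ t, aux_key θ hθ.1 hfin a b t ha hb (iIoo θ t₀ t) t₀ h rfl⟩
end
end
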